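/- arXiv:2604.01510 — 13 statements merged into one kernel-verified Lean document; each statement's English description precedes it below -/
import Mathlib

section
/- Let A be an M×N partial sign matrix and let d ≥ 1. If the sign-rank of A is at most d, then there exists a linear map g : ℝ^N → ℝ^d (i.e., g : (Fin N → ℝ) →ₗ[ℝ] (Fin d → ℝ)) such that 0 ∉ g(|S(A)|), i.e., g(x) ≠ 0 for every x in the crosspolytope realization |S(A)|. (This is the inequality ind_lin(S(A)) ≤ srank(A) − 1 from the paper's Main Lemma 1.) -/
open scoped RealInnerProductSpace Pointwise

/-- The realized simplex of row `i` of the partial sign matrix `A`: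
the convex hull of `{e_j : A i j = 1} ∪ {-e_j : A i j = -1}`. -/
noncomputable def rowSimplex {M N : ℕ} (A : Fin M → Fin N → ℤ) (i : Fin M) :
    Set (Fin N → ℝ) :=
  convexHull ℝ
    ({x | ∃ j, A i j = 1 ∧ x = Pi.single j (1 : ℝ)} ∪
     {x | ∃ j, A i j = -1 ∧ x = -Pi.single j (1 : ℝ)})

/-- The crosspolytope realization `|S(A)|` of the sign complex of `A`. -/
noncomputable def signComplexReal {M N : ℕ} (A : Fin M → Fin N → ℤ) :
    Set (Fin N → ℝ) :=
  ⋃ i, (rowSimplex A i ∪ -(rowSimplex A i))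

/-!
Realize the sign pattern by vectors `u i, v j ∈ ℝ^d` and let `g` send `e_j` to `v j`. For each
row `i`, the functional `x ↦ ⟪u i, g x⟫` is positive on every vertex `±e_j` of `σ_i`, hence on
`σ_i` by convexity, and negative on `-σ_i`; so `g` does not vanish on `|S(A)|`.
-/

section

variable {M N : ℕ} {A : Fin M → Fin N → ℤ}

theorem pos_of_mem_rowSimplex {i : Fin M} (φ : (Fin N → ℝ) →ₗ[ℝ] ℝ)
    (hφ : ∀ j, A i j ≠ 0 → 0 < (A i j : ℝ) * φ (Pi.single j 1))
    {x : Fin N → ℝ} (hx : x ∈ rowSimplex A i) : 0 < φ x := by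
  refine convexHull_min ?_ (convex_halfSpace_gt φ.isLinear 0) hx
  rintro _ (⟨j, hj, rfl⟩ | ⟨j, hj, rfl⟩)
  · simpa [hj] using hφ j (by simp [hj])
  · simpa [hj] using hφ j (by simp [hj])

theorem linearCombination_ne_zero_of_mem_signComplexReal {E : Type*} [NormedAddCommGroup E]
    [InnerProductSpace ℝ E] {u : Fin M → E} {v : Fin N → E}
    (huv : ∀ i j, A i j ≠ 0 → 0 < (A i j : ℝ) * ⟪u i, v j⟫)
    {x : Fin N → ℝ} (hx : x ∈ signComplexReal A) :
    Fintype.linearCombination ℝ v x ≠ 0 := by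
  obtain ⟨i, hx⟩ := Set.mem_iUnion.mp hx
  have hpos : ∀ y ∈ rowSimplex A i, 0 < ⟪u i, Fintype.linearCombination ℝ v y⟫ := fun y hy =>
    pos_of_mem_rowSimplex (innerₛₗ ℝ (u i) ∘ₗ Fintype.linearCombination ℝ v)
      (by simpa using huv i) hy
  intro hzero
  rcases hx with hx | hx
  · simpa [hzero] using hpos x hx
  · simpa [hzero] using hpos (-x) hx

end

theorem linear_index_le_srank_general {M N : ℕ} (d : ℕ)
    (A : Fin M → Fin N → ℤ)
    (hrank : ∃ (u : Fin M → EuclideanSpace ℝ (Fin d))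
        (v : Fin N → EuclideanSpace ℝ (Fin d)),
      ∀ i j, A i j ≠ 0 → 0 < (A i j : ℝ) * ⟪u i, v j⟫) :
    ∃ g : (Fin N → ℝ) →ₗ[ℝ] (Fin d → ℝ),
      ∀ x ∈ signComplexReal A, g x ≠ 0 := by
  obtain ⟨u, v, huv⟩ := hrank
  refine ⟨(WithLp.linearEquiv 2 ℝ (Fin d → ℝ)).toLinearMap ∘ₗ Fintype.linearCombination ℝ v,
    fun x hx => ?_⟩
  simpa using linearCombination_ne_zero_of_mem_signComplexReal huv hx

/-- If the sign-rank of a partial sign matrix `A` is at most `d`, then there is a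
linear map `g : ℝ^N → ℝ^d` avoiding the origin on `|S(A)|`, i.e.
`ind_lin(S(A)) ≤ srank(A) - 1`. -/
theorem linear_index_le_srank {M N : ℕ} (d : ℕ) (hd : 1 ≤ d)
    (A : Fin M → Fin N → ℤ)
    (hA : ∀ i j, A i j = -1 ∨ A i j = 0 ∨ A i j = 1)
    (hrank : ∃ (u : Fin M → EuclideanSpace ℝ (Fin d))
        (v : Fin N → EuclideanSpace ℝ (Fin d)),
      ∀ i j, A i j ≠ 0 → 0 < (A i j : ℝ) * ⟪u i, v j⟫) :
    ∃ g : (Fin N → ℝ) →ₗ[ℝ] (Fin d → ℝ),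
      ∀ x ∈ signComplexReal A, g x ≠ 0 :=
  linear_index_le_srank_general d A hrank
end

section
/- Let A be an M×N partial sign matrix and let d ≥ 1. If there exists a linear map g : ℝ^N → ℝ^d (i.e., g : (Fin N → ℝ) →ₗ[ℝ] (Fin d → ℝ)) such that g(x) ≠ 0 for every x in the crosspolytope realization |S(A)|, then the sign-rank of A is at most d. (This is the inequality srank(A) − 1 ≤ ind_lin(S(A)) from the paper's Main Lemma 1.) -/
open scoped RealInnerProductSpace Pointwise

/-!
Put `v j := g(e_j)`, viewed in Euclidean space. The image under `g` of the simplex of row `i`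
is the convex hull of the finitely many vectors `A i j • v j` with `A i j ≠ 0`, and it misses the
origin by assumption. Separating this compact convex set from `0` by a hyperplane gives a normal
vector `u i` with `0 < ⟪u i, A i j • v j⟫` for every such `j`.
-/

theorem exists_forall_inner_pos_of_zero_notMem_convexHull {E : Type*} [NormedAddCommGroup E]
    [InnerProductSpace ℝ E] [CompleteSpace E] {S : Set E} (hS : S.Finite)
    (h0 : (0 : E) ∉ convexHull ℝ S) : ∃ u : E, ∀ x ∈ S, 0 < ⟪u, x⟫ := by
  obtain ⟨f, c, hfc, hc⟩ := geometric_hahn_banach_closed_point (convex_convexHull ℝ S)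
    (hS.isCompact_convexHull ℝ).isClosed h0
  refine ⟨-(InnerProductSpace.toDual ℝ E).symm f, fun x hx => ?_⟩
  have hfx : f x < c := hfc x (subset_convexHull ℝ S hx)
  rw [inner_neg_left, InnerProductSpace.toDual_symm_apply]
  linarith [map_zero f]

section RowSimplex

variable {M N : ℕ} {A : Fin M → Fin N → ℤ} {i : Fin M}

theorem image_rowSimplex {E : Type*} [AddCommGroup E] [Module ℝ E]
    (hA : ∀ j, A i j = -1 ∨ A i j = 0 ∨ A i j = 1) (φ : (Fin N → ℝ) →ₗ[ℝ] E) :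
    φ '' rowSimplex A i =
      convexHull ℝ ((fun j => (A i j : ℝ) • φ (Pi.single j 1)) '' {j | A i j ≠ 0}) := by
  rw [rowSimplex, φ.image_convexHull]
  congr 1
  ext x
  constructor
  · rintro ⟨y, ⟨j, hj, rfl⟩ | ⟨j, hj, rfl⟩, rfl⟩ <;> exact ⟨j, by simp [hj], by simp [hj]⟩
  · rintro ⟨j, hj, rfl⟩
    rcases hA j with h | h | h
    · exact ⟨_, Or.inr ⟨j, h, rfl⟩, by simp [h]⟩
    · exact absurd h hj
    · exact ⟨_, Or.inl ⟨j, h, rfl⟩, by simp [h]⟩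

theorem exists_forall_sign_inner_pos_of_rowSimplex {E : Type*} [NormedAddCommGroup E]
    [InnerProductSpace ℝ E] [CompleteSpace E] (hA : ∀ j, A i j = -1 ∨ A i j = 0 ∨ A i j = 1)
    (φ : (Fin N → ℝ) →ₗ[ℝ] E) (hφ : ∀ x ∈ rowSimplex A i, φ x ≠ 0) :
    ∃ u : E, ∀ j, A i j ≠ 0 → 0 < (A i j : ℝ) * ⟪u, φ (Pi.single j 1)⟫ := by
  have h0 : (0 : E) ∉ φ '' rowSimplex A i := fun ⟨x, hx, hx0⟩ => hφ x hx hx0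
  rw [image_rowSimplex hA] at h0
  obtain ⟨u, hu⟩ := exists_forall_inner_pos_of_zero_notMem_convexHull (Set.toFinite _) h0
  refine ⟨u, fun j hj => ?_⟩
  simpa [real_inner_smul_right] using hu _ ⟨j, hj, rfl⟩

end RowSimplex

theorem srank_le_linear_index_general {M N : ℕ} (d : ℕ)
    (A : Fin M → Fin N → ℤ)
    (hA : ∀ i j, A i j = -1 ∨ A i j = 0 ∨ A i j = 1)
    (hlin : ∃ g : (Fin N → ℝ) →ₗ[ℝ] (Fin d → ℝ),
      ∀ x ∈ signComplexReal A, g x ≠ 0) :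
    ∃ (u : Fin M → EuclideanSpace ℝ (Fin d))
      (v : Fin N → EuclideanSpace ℝ (Fin d)),
      ∀ i j, A i j ≠ 0 → 0 < (A i j : ℝ) * ⟪u i, v j⟫ := by
  obtain ⟨g, hg⟩ := hlin
  let φ : (Fin N → ℝ) →ₗ[ℝ] EuclideanSpace ℝ (Fin d) :=
    (WithLp.linearEquiv 2 ℝ (Fin d → ℝ)).symm.toLinearMap ∘ₗ g
  have hφ : ∀ i, ∀ x ∈ rowSimplex A i, φ x ≠ 0 := fun i x hx => by
    simpa [φ] using hg x (Set.mem_iUnion.2 ⟨i, Or.inl hx⟩)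
  choose u hu using fun i => exists_forall_sign_inner_pos_of_rowSimplex (hA i) φ (hφ i)
  exact ⟨u, fun j => φ (Pi.single j 1), hu⟩

/-- If there is a linear map `g : ℝ^N → ℝ^d` avoiding the origin on `|S(A)|`,
then the sign-rank of `A` is at most `d`, i.e. `srank(A) - 1 ≤ ind_lin(S(A))`. -/
theorem srank_le_linear_index {M N : ℕ} (d : ℕ) (hd : 1 ≤ d)
    (A : Fin M → Fin N → ℤ)
    (hA : ∀ i j, A i j = -1 ∨ A i j = 0 ∨ A i j = 1)
    (hlin : ∃ g : (Fin N → ℝ) →ₗ[ℝ] (Fin d → ℝ),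
      ∀ x ∈ signComplexReal A, g x ≠ 0) :
    ∃ (u : Fin M → EuclideanSpace ℝ (Fin d))
      (v : Fin N → EuclideanSpace ℝ (Fin d)),
      ∀ i j, A i j ≠ 0 → 0 < (A i j : ℝ) * ⟪u i, v j⟫ :=
  srank_le_linear_index_general d A hA hlin
end

section
/- (Sign-rank upper bound for Gap Hamming Distance.) For all n, k ∈ ℕ with 2k < n, there exist maps u, v : (Fin n → Bool) → EuclideanSpace ℝ (Fin (2k+1)) such that for all x, y ∈ {0,1}^n: if hammingDist x y ≤ k then ⟪u x, v y⟫ > 0, and if hammingDist x y ≥ n − k then ⟪u x, v y⟫ < 0. In particular srank(GHD_k^n) ≤ 2k + 1. -/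
/-!
Send `x` to the `±1`-vector of its first `2k + 1` coordinates. For `±1`-vectors on `m`
coordinates, `⟪x, y⟫ = m - 2 d(x, y)`, and restricting to fewer coordinates can only decrease
Hamming distance, so `d(x, y) ≤ k < m / 2` makes the inner product positive. The far case reduces
to the near one by flipping every bit of `y`, which negates its vector and turns `d(x, y) ≥ n - k`
into `d(x, ¬y) ≤ k`.
-/

open scoped RealInnerProductSpace
open Finset Function

section
variable {ι κ : Type*}

noncomputable def signVec (x : ι → Bool) : EuclideanSpace ℝ ι :=
  WithLp.toLp 2 fun i => if x i then 1 else -1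

theorem signVec_not (x : ι → Bool) : signVec (fun i => !x i) = -signVec x := by
  ext i
  simp only [signVec, PiLp.neg_apply]
  cases x i <;> norm_num

variable [Fintype ι] [Fintype κ]

theorem inner_signVec (x y : ι → Bool) :
    ⟪signVec x, signVec y⟫ = Fintype.card ι - 2 * hammingDist x y := by
  have hterm : ∀ i, (if y i then (1 : ℝ) else -1) * (if x i then 1 else -1)
      = 1 - 2 * if x i ≠ y i then 1 else 0 := by
    intro i
    cases x i <;> cases y i <;> norm_num
  simp only [signVec, PiLp.inner_apply, RCLike.inner_apply, conj_trivial, hterm,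
    sum_sub_distrib, ← mul_sum, sum_boole, sum_const, card_univ, nsmul_eq_mul, mul_one]
  rfl

theorem hammingDist_not_right (x y : ι → Bool) :
    hammingDist x (fun i => !y i) = Fintype.card ι - hammingDist x y := by
  have hsplit := card_filter_add_card_filter_not (s := univ) (fun i => x i ≠ y i)
  simp only [card_univ, not_not] at hsplit
  have heq : hammingDist x (fun i => !y i) = #{i | x i = y i} := by
    unfold hammingDist
    congr 1
    ext i
    cases x i <;> cases y i <;> simp
  rw [heq, hammingDist]
  omega

theorem hammingDist_comp_le_of_injective {f : ι → κ} (hf : Injective f) (x y : κ → Bool) :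
    hammingDist (x ∘ f) (y ∘ f) ≤ hammingDist x y :=
  card_le_card_of_injOn f (fun i hi => by simpa using hi) hf.injOn

theorem inner_signVec_comp_pos {f : ι → κ} (hf : Injective f) {k : ℕ}
    (hk : 2 * k < Fintype.card ι) {x y : κ → Bool} (hxy : hammingDist x y ≤ k) :
    0 < ⟪signVec (x ∘ f), signVec (y ∘ f)⟫ := by
  have hle := (hammingDist_comp_le_of_injective hf x y).trans hxy
  rw [inner_signVec, sub_pos]
  exact_mod_cast (by omega : 2 * hammingDist (x ∘ f) (y ∘ f) < Fintype.card ι)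

theorem inner_signVec_comp_neg {f : ι → κ} (hf : Injective f) {k : ℕ}
    (hk : 2 * k < Fintype.card ι) {x y : κ → Bool} (hxy : Fintype.card κ - k ≤ hammingDist x y) :
    ⟪signVec (x ∘ f), signVec (y ∘ f)⟫ < 0 := by
  have hflip : hammingDist x (fun i => !y i) ≤ k := by
    rw [hammingDist_not_right]
    omega
  have hpos := inner_signVec_comp_pos hf hk hflip
  rw [comp_def, comp_def, signVec_not, inner_neg_right, neg_pos] at hpos
  exact hpos

end

/-- Sign-rank upper bound for Gap Hamming Distance: `srank(GHD_k^n) ≤ 2k + 1`,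
witnessed by explicit vectors in `ℝ^{2k+1}`. -/
theorem ghd_srank_upper (n k : ℕ) (h : 2 * k < n) :
    ∃ (u v : (Fin n → Bool) → EuclideanSpace ℝ (Fin (2 * k + 1))),
      ∀ x y : Fin n → Bool,
        (hammingDist x y ≤ k → 0 < ⟪u x, v y⟫) ∧
        (n - k ≤ hammingDist x y → ⟪u x, v y⟫ < 0) := by
  have hf : Injective (Fin.castLE h) := Fin.castLE_injective h
  have hk : 2 * k < Fintype.card (Fin (2 * k + 1)) := by simp
  refine ⟨fun x => signVec (x ∘ Fin.castLE h), fun y => signVec (y ∘ Fin.castLE h),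
    fun x y => ⟨inner_signVec_comp_pos hf hk, fun hxy => inner_signVec_comp_neg hf hk ?_⟩⟩
  rwa [Fintype.card_fin]
end

section
/- (Weak coindex bound for Gap Hamming Distance.) Let n, k ∈ ℕ with 2k < n. Then there exists a continuous map f from the unit sphere S^k (the set {x ∈ EuclideanSpace ℝ (Fin (k+1)) : ‖x‖ = 1}) into ℝ^({0,1}^n) such that f(x) ∈ |S(GHD_k^n)| and f(−x) = −f(x) for all x ∈ S^k. In particular coind_{ℤ₂}(S(GHD_k^n)) ≥ k. -/
open scoped Pointwise

/-- The realized simplex `σ_x` of the Gap Hamming Distance sign complex: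
the convex hull of `{e_y : d_H(x,y) ≤ k} ∪ {-e_y : d_H(x,y) ≥ n - k}`. -/
noncomputable def ghdSimplex (n k : ℕ) (x : Fin n → Bool) :
    Set ((Fin n → Bool) → ℝ) :=
  convexHull ℝ
    ({v | ∃ y, hammingDist x y ≤ k ∧ v = Pi.single y (1 : ℝ)} ∪
     {v | ∃ y, n - k ≤ hammingDist x y ∧ v = -Pi.single y (1 : ℝ)})

/-- The crosspolytope realization `|S(GHD_k^n)|`. -/
noncomputable def ghdRealization (n k : ℕ) : Set ((Fin n → Bool) → ℝ) :=
  ⋃ x, (ghdSimplex n k x ∪ -(ghdSimplex n k x))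

/-!
Cut `[0, 1]` at the partial sums `x₀² + ⋯ + x_{i-1}²` into `k + 1` pieces of lengths `x_i²`, and
call the `i`-th piece positive if `x_i > 0`. Split `[0, 1]` into `n` equal cells and let `w_j` be
the fraction of the `j`-th cell covered by positive pieces. Only a cell containing one of the `k`
interior cut points can have `0 < w_j < 1`, so the product `q` of the Bernoulli(`w_j`)
distributions is supported in the Hamming ball of radius `k` around the rounding `z` of `w`. Then
`∑_y q(y) (e_y - e_{ȳ}) / 2` lies in `σ_z`, because `ȳ` is at distance at least `n - k` from `z`.
Replacing `x` by `-x` swaps positive and negative pieces, so `w ↦ 1 - w`, `q(y) ↦ q(ȳ)` and the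
point changes sign. Writing covered lengths with clamps and `max x_i 0` keeps everything continuous.
-/

open Finset

section BooleanCube

variable {n : ℕ}

theorem hammingDist_compl_right (z y : Fin n → Bool) :
    hammingDist z yᶜ = n - hammingDist z y := by
  have hsplit := card_filter_add_card_filter_not (s := (univ : Finset (Fin n)))
    (p := fun j => z j ≠ y j)
  have hcompl : #{j | z j ≠ yᶜ j} = #{j | ¬z j ≠ y j} := by
    congr 1
    refine filter_congr fun j _ => ?_
    cases z j <;> cases hy : y j <;> simp [hy]
  rw [card_univ, Fintype.card_fin] at hsplit
  rw [hammingDist, hcompl, hammingDist]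
  omega

noncomputable def bernoulliProd (w : Fin n → ℝ) (y : Fin n → Bool) : ℝ :=
  ∏ j, if y j then w j else 1 - w j

theorem sum_bernoulliProd (w : Fin n → ℝ) : ∑ y, bernoulliProd w y = 1 := by
  refine (Fintype.prod_sum fun j (b : Bool) => if b then w j else 1 - w j).symm.trans ?_
  simp

theorem bernoulliProd_nonneg {w : Fin n → ℝ} (hw₀ : ∀ j, 0 ≤ w j) (hw₁ : ∀ j, w j ≤ 1)
    (y : Fin n → Bool) : 0 ≤ bernoulliProd w y :=
  prod_nonneg fun j _ => by
    split_ifs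
    · exact hw₀ j
    · exact sub_nonneg.2 (hw₁ j)

theorem bernoulliProd_one_sub (w : Fin n → ℝ) :
    bernoulliProd (1 - w) = bernoulliProd w ∘ compl := by
  refine funext fun y => prod_congr rfl fun j _ => ?_
  cases hy : y j <;> simp [hy]

theorem continuous_bernoulliProd (y : Fin n → Bool) :
    Continuous fun w : Fin n → ℝ => bernoulliProd w y :=
  continuous_finsetProd _ fun j _ => by
    cases y j <;> simp only [Bool.false_eq_true, if_true, if_false] <;> fun_prop

theorem hammingDist_le_of_bernoulliProd_ne_zero {w : Fin n → ℝ} {y : Fin n → Bool}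
    (hy : bernoulliProd w y ≠ 0) :
    hammingDist (fun j => decide (w j = 1)) y ≤ #{j | w j ≠ 0 ∧ w j ≠ 1} := by
  refine card_le_card fun j hj => ?_
  have hfactor := prod_ne_zero_iff.1 hy j (mem_univ j)
  simp only [mem_filter, mem_univ, true_and] at hj ⊢
  by_cases hw : w j = 1 <;> cases hyj : y j <;> simp_all

end BooleanCube

section AntipodalSum

variable {n : ℕ}

noncomputable def antipodalSum (q : (Fin n → Bool) → ℝ) : (Fin n → Bool) → ℝ :=
  ∑ y, (q y / 2) • (Pi.single y 1 - Pi.single yᶜ 1)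

theorem antipodalSum_comp_compl (q : (Fin n → Bool) → ℝ) :
    antipodalSum (q ∘ compl) = -antipodalSum q := by
  rw [antipodalSum, ← Equiv.sum_comp (compl_involutive.toPerm _), antipodalSum, ← sum_neg_distrib]
  refine sum_congr rfl fun y _ => ?_
  simp only [Function.Involutive.coe_toPerm, Function.comp_apply, compl_compl]
  rw [← smul_neg, neg_sub]

theorem continuous_antipodalSum : Continuous (antipodalSum (n := n)) := by
  unfold antipodalSum
  fun_prop

theorem sum_smul_mem_convexHull {ι E : Type*} [Fintype ι] [AddCommGroup E] [Module ℝ E]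
    {s : Set E} {w : ι → ℝ} {p : ι → E} (hw₀ : ∀ i, 0 ≤ w i) (hw₁ : ∑ i, w i = 1)
    (hp : ∀ i, w i ≠ 0 → p i ∈ convexHull ℝ s) : ∑ i, w i • p i ∈ convexHull ℝ s := by
  rw [← finsum_eq_sum_of_fintype]
  exact (convex_convexHull ℝ s).finsum_mem hw₀ (by rwa [finsum_eq_sum_of_fintype]) hp

theorem antipodalSum_mem_ghdSimplex {k : ℕ} {q : (Fin n → Bool) → ℝ} {z : Fin n → Bool}
    (hq₀ : ∀ y, 0 ≤ q y) (hq₁ : ∑ y, q y = 1)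
    (hsupp : ∀ y, q y ≠ 0 → hammingDist z y ≤ k) :
    antipodalSum q ∈ ghdSimplex n k z := by
  have hsplit : antipodalSum q = ∑ y, q y •
      ((1 / 2 : ℝ) • Pi.single y 1 + (1 / 2 : ℝ) • -Pi.single yᶜ (1 : ℝ)) := by
    refine sum_congr rfl fun y _ => ?_
    rw [← smul_add, smul_smul, ← sub_eq_add_neg, mul_one_div]
  rw [hsplit]
  refine sum_smul_mem_convexHull hq₀ hq₁ fun y hy => ?_
  have hfar : n - k ≤ hammingDist z yᶜ := by
    rw [hammingDist_compl_right]
    exact Nat.sub_le_sub_left (hsupp y hy) n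
  exact convex_convexHull ℝ _
    (subset_convexHull ℝ _ (by left; exact ⟨y, hsupp y hy, rfl⟩))
    (subset_convexHull ℝ _ (by right; exact ⟨yᶜ, hfar, rfl⟩))
    (by norm_num) (by norm_num) (by norm_num)

end AntipodalSum

section CellWeights

variable {k n : ℕ}

noncomputable def cellClamp (n j : ℕ) (u : ℝ) : ℝ :=
  max (j / n) (min ((j + 1) / n) u)

theorem cell_left_le_right (n j : ℕ) : (j : ℝ) / n ≤ (j + 1) / n := by
  gcongr
  linarith

theorem monotone_cellClamp (n j : ℕ) : Monotone (cellClamp n j) :=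
  fun _ _ h => max_le_max le_rfl (min_le_min le_rfl h)

theorem continuous_cellClamp (n j : ℕ) : Continuous (cellClamp n j) := by
  unfold cellClamp
  fun_prop

theorem cellClamp_of_le_left {j : ℕ} {u : ℝ} (h : u ≤ j / n) : cellClamp n j u = j / n :=
  max_eq_left (min_le_of_right_le h)

theorem cellClamp_of_right_le {j : ℕ} {u : ℝ} (h : ((j : ℝ) + 1) / n ≤ u) :
    cellClamp n j u = (j + 1) / n := by
  rw [cellClamp, min_eq_left h, max_eq_right (cell_left_le_right n j)]

theorem cellClamp_eq_or_of_notMem_Ioo {j : ℕ} {u : ℝ}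
    (hu : u ∉ Set.Ioo ((j : ℝ) / n) ((j + 1) / n)) :
    cellClamp n j u = j / n ∨ cellClamp n j u = (j + 1) / n := by
  rcases le_or_gt u (j / n) with h | h
  · exact Or.inl (cellClamp_of_le_left h)
  · exact Or.inr (cellClamp_of_right_le (not_lt.1 fun h' => hu ⟨h, h'⟩))

theorem natCast_mul_cell_length (j : Fin n) : (n : ℝ) * ((j + 1) / n - j / n) = 1 := by
  have : (n : ℝ) ≠ 0 := Nat.cast_ne_zero.2 (Fin.pos j).ne'
  field_simp
  ring

theorem cell_right_le_one (j : Fin n) : ((j : ℝ) + 1) / n ≤ 1 := by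
  rw [div_le_one (Nat.cast_pos.2 (Fin.pos j))]
  exact_mod_cast j.isLt

theorem floor_eq_of_mem_cell {j : ℕ} {u : ℝ} (hu : u ∈ Set.Ioo ((j : ℝ) / n) ((j + 1) / n)) :
    ⌊n * u⌋₊ = j := by
  have hn : (0 : ℝ) < n := by
    rcases Nat.eq_zero_or_pos n with rfl | hn
    · simp at hu
    · exact_mod_cast hn
  rw [Nat.floor_eq_iff (mul_nonneg hn.le ((div_nonneg j.cast_nonneg hn.le).trans hu.1.le))]
  rw [Set.mem_Ioo, div_lt_iff₀' hn, lt_div_iff₀' hn] at hu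
  exact ⟨hu.1.le, hu.2⟩

def cumSq (x : Fin (k + 1) → ℝ) (i : ℕ) : ℝ :=
  ∑ l ∈ univ.filter (fun l : Fin (k + 1) => (l : ℕ) < i), x l ^ 2

theorem cumSq_zero (x : Fin (k + 1) → ℝ) : cumSq x 0 = 0 := by
  simp [cumSq]

theorem cumSq_last (x : Fin (k + 1) → ℝ) : cumSq x (k + 1) = ∑ l, x l ^ 2 := by
  rw [cumSq, filter_true_of_mem fun l _ => l.isLt]

theorem cumSq_succ (x : Fin (k + 1) → ℝ) (i : Fin (k + 1)) :
    cumSq x (i + 1) = cumSq x i + x i ^ 2 := by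
  have : univ.filter (fun l : Fin (k + 1) => (l : ℕ) < i + 1) =
      insert i (univ.filter fun l : Fin (k + 1) => (l : ℕ) < i) := by
    ext l
    simp only [mem_filter, mem_univ, true_and, mem_insert, Fin.ext_iff]
    omega
  rw [cumSq, this, sum_insert (by simp), add_comm, cumSq]

theorem cumSq_neg (x : Fin (k + 1) → ℝ) (i : ℕ) : cumSq (-x) i = cumSq x i := by
  simp [cumSq]

theorem continuous_cumSq (i : ℕ) : Continuous fun x : Fin (k + 1) → ℝ => cumSq x i := by
  unfold cumSq
  fun_prop

/-- `cellClamp n j b - cellClamp n j a` is the length of `[a, b] ∩ [j / n, (j + 1) / n]`, and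
`[cumSq x (i + 1) - (max (x i) 0) ^ 2, cumSq x (i + 1)]` is the `i`-th piece
`[cumSq x i, cumSq x (i + 1)]` of `[0, 1]` if `0 ≤ x i`, and a single point otherwise. -/
noncomputable def positiveCover (n : ℕ) (x : Fin (k + 1) → ℝ) (j : ℕ) (i : Fin (k + 1)) : ℝ :=
  cellClamp n j (cumSq x (i + 1)) - cellClamp n j (cumSq x (i + 1) - max (x i) 0 ^ 2)

noncomputable def cellWeight (n : ℕ) (x : Fin (k + 1) → ℝ) (j : Fin n) : ℝ :=
  n * ∑ i, positiveCover n x j i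

theorem positiveCover_nonneg (x : Fin (k + 1) → ℝ) (j : ℕ) (i : Fin (k + 1)) :
    0 ≤ positiveCover n x j i :=
  sub_nonneg.2 (monotone_cellClamp n j (sub_le_self _ (sq_nonneg _)))

theorem positiveCover_add_neg (x : Fin (k + 1) → ℝ) (j : ℕ) (i : Fin (k + 1)) :
    positiveCover n x j i + positiveCover n (-x) j i =
      cellClamp n j (cumSq x (i + 1)) - cellClamp n j (cumSq x i) := by
  have hprev := cumSq_succ x i
  simp only [positiveCover, cumSq_neg, Pi.neg_apply]
  rcases le_total (x i) 0 with h | h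
  · rw [max_eq_right h, max_eq_left (neg_nonneg.2 h), neg_sq, hprev, add_sub_cancel_right]
    simp
  · rw [max_eq_left h, max_eq_right (neg_nonpos.2 h), hprev, add_sub_cancel_right]
    simp

theorem sum_cellClamp_cumSq_sub {x : Fin (k + 1) → ℝ} (hx : ∑ l, x l ^ 2 = 1) (j : Fin n) :
    ∑ i : Fin (k + 1), (cellClamp n j (cumSq x (i + 1)) - cellClamp n j (cumSq x i)) =
      (j + 1) / n - j / n := by
  rw [Fin.sum_univ_eq_sum_range
      (fun i => cellClamp n j (cumSq x (i + 1)) - cellClamp n j (cumSq x i)),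
    sum_range_sub (fun i => cellClamp n j (cumSq x i)), cumSq_last, hx, cumSq_zero,
    cellClamp_of_right_le (cell_right_le_one j), cellClamp_of_le_left (by positivity)]

theorem cellWeight_add_neg {x : Fin (k + 1) → ℝ} (hx : ∑ l, x l ^ 2 = 1) (j : Fin n) :
    cellWeight n x j + cellWeight n (-x) j = 1 := by
  rw [cellWeight, cellWeight, ← mul_add, ← sum_add_distrib]
  simp only [positiveCover_add_neg]
  rw [sum_cellClamp_cumSq_sub hx, natCast_mul_cell_length]

theorem cellWeight_nonneg (x : Fin (k + 1) → ℝ) (j : Fin n) : 0 ≤ cellWeight n x j :=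
  mul_nonneg n.cast_nonneg (sum_nonneg fun i _ => positiveCover_nonneg x j i)

theorem cellWeight_le_one {x : Fin (k + 1) → ℝ} (hx : ∑ l, x l ^ 2 = 1) (j : Fin n) :
    cellWeight n x j ≤ 1 := by
  linarith [cellWeight_add_neg hx j, cellWeight_nonneg (-x) j]

theorem cellWeight_neg {x : Fin (k + 1) → ℝ} (hx : ∑ l, x l ^ 2 = 1) :
    cellWeight n (-x) = 1 - cellWeight n x :=
  funext fun j => eq_sub_of_add_eq' (cellWeight_add_neg hx j)

theorem continuous_cellWeight (j : Fin n) :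
    Continuous fun x : Fin (k + 1) → ℝ => cellWeight n x j := by
  have := continuous_cellClamp n j
  have := continuous_cumSq (k := k)
  unfold cellWeight positiveCover
  fun_prop

theorem exists_natCast_eq_cellWeight {x : Fin (k + 1) → ℝ} (hx : ∑ l, x l ^ 2 = 1) (j : Fin n)
    (hcut : ∀ l ∈ Icc 1 k, cumSq x l ∉ Set.Ioo ((j : ℝ) / n) ((j + 1) / n)) :
    ∃ m : ℕ, cellWeight n x j = m := by
  have hclamp : ∀ l ≤ k + 1,
      cellClamp n j (cumSq x l) = j / n ∨ cellClamp n j (cumSq x l) = (j + 1) / n := by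
    intro l hl
    rcases Nat.eq_zero_or_pos l with rfl | hl₀
    · exact Or.inl (cellClamp_of_le_left (by rw [cumSq_zero]; positivity))
    rcases hl.eq_or_lt with rfl | hlk
    · exact Or.inr (cellClamp_of_right_le (by rw [cumSq_last, hx]; exact cell_right_le_one j))
    · exact cellClamp_eq_or_of_notMem_Ioo (hcut l (mem_Icc.2 ⟨hl₀, by omega⟩))
  have hterm : ∀ i,
      (n : ℝ) * positiveCover n x j i = 0 ∨ (n : ℝ) * positiveCover n x j i = 1 := by
    intro i
    rcases le_total (x i) 0 with h | h
    · simp [positiveCover, max_eq_right h]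
    have hcover : positiveCover n x j i =
        cellClamp n j (cumSq x (i + 1)) - cellClamp n j (cumSq x i) := by
      rw [positiveCover, max_eq_left h, cumSq_succ, add_sub_cancel_right]
    have hnonneg := positiveCover_nonneg (n := n) x j i
    have hlength := natCast_mul_cell_length j
    rw [hcover] at hnonneg ⊢
    rcases hclamp (i + 1) (by omega) with h₁ | h₁ <;> rcases hclamp i (by omega) with h₂ | h₂ <;>
      rw [h₁, h₂] at hnonneg ⊢
    · simp
    · exfalso
      have : ((j : ℝ) + 1) / n = j / n := le_antisymm (by linarith) (cell_left_le_right n j)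
      simp [this] at hlength
    · exact Or.inr hlength
    · simp
  refine ⟨∑ i, if (n : ℝ) * positiveCover n x j i = 1 then 1 else 0, ?_⟩
  rw [cellWeight, mul_sum]
  push_cast
  refine sum_congr rfl fun i _ => ?_
  rcases hterm i with h | h <;> simp [h]

theorem card_fractional_cellWeight_le {x : Fin (k + 1) → ℝ} (hx : ∑ l, x l ^ 2 = 1) :
    #{j | cellWeight n x j ≠ 0 ∧ cellWeight n x j ≠ 1} ≤ k := by
  have hcut : ∀ j : Fin n, cellWeight n x j ≠ 0 → cellWeight n x j ≠ 1 →
      ∃ l ∈ Icc 1 k, ⌊n * cumSq x l⌋₊ = j := by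
    intro j h₀ h₁
    by_contra! hnone
    obtain ⟨m, hm⟩ := exists_natCast_eq_cellWeight hx j
      fun l hl hmem => hnone l hl (floor_eq_of_mem_cell hmem)
    have hle := cellWeight_le_one hx j
    rw [hm] at h₀ h₁ hle
    norm_cast at h₀ h₁ hle
    omega
  calc _ ≤ #((Icc 1 k).image fun l => ⌊n * cumSq x l⌋₊) := by
        refine card_le_card_of_injOn Fin.val (fun j hj => ?_) Fin.val_injective.injOn
        simp only [coe_filter, mem_univ, true_and, Set.mem_ofPred_eq] at hj
        obtain ⟨l, hl, hfloor⟩ := hcut j hj.1 hj.2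
        exact mem_image.2 ⟨l, hl, hfloor⟩
    _ ≤ #(Icc 1 k) := card_image_le
    _ = k := Nat.card_Icc 1 k

end CellWeights

theorem sum_sq_ofLp_eq_one {k : ℕ} {x : EuclideanSpace ℝ (Fin (k + 1))}
    (hx : x ∈ Metric.sphere (0 : EuclideanSpace ℝ (Fin (k + 1))) 1) :
    ∑ l, x.ofLp l ^ 2 = 1 := by
  rw [← EuclideanSpace.real_norm_sq_eq, mem_sphere_zero_iff_norm.1 hx, one_pow]

theorem ghd_coindex_weak_general (n k : ℕ) :
    ∃ f : EuclideanSpace ℝ (Fin (k + 1)) → ((Fin n → Bool) → ℝ),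
      ContinuousOn f (Metric.sphere (0 : EuclideanSpace ℝ (Fin (k + 1))) 1) ∧
      (∀ x ∈ Metric.sphere (0 : EuclideanSpace ℝ (Fin (k + 1))) 1,
        f x ∈ ghdRealization n k) ∧
      (∀ x ∈ Metric.sphere (0 : EuclideanSpace ℝ (Fin (k + 1))) 1,
        f (-x) = -f x) := by
  refine ⟨fun x => antipodalSum (bernoulliProd (cellWeight n x.ofLp)), ?_, fun x hx => ?_,
    fun x hx => ?_⟩
  · have hweight : Continuous fun x : EuclideanSpace ℝ (Fin (k + 1)) => cellWeight n x.ofLp :=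
      continuous_pi fun j => (continuous_cellWeight j).comp (PiLp.continuous_ofLp 2 _)
    exact (continuous_antipodalSum.comp
      (continuous_pi fun y => (continuous_bernoulliProd y).comp hweight)).continuousOn
  · have hx₁ := sum_sq_ofLp_eq_one hx
    refine Set.mem_iUnion.2 ⟨fun j => decide (cellWeight n x.ofLp j = 1),
      Or.inl (antipodalSum_mem_ghdSimplex
        (bernoulliProd_nonneg (cellWeight_nonneg _) (cellWeight_le_one hx₁))
        (sum_bernoulliProd _) fun y hy => ?_)⟩
    exact (hammingDist_le_of_bernoulliProd_ne_zero hy).trans (card_fractional_cellWeight_le hx₁)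
  · dsimp only
    rw [WithLp.ofLp_neg, cellWeight_neg (sum_sq_ofLp_eq_one hx), bernoulliProd_one_sub,
      antipodalSum_comp_compl]

/-- Weak coindex bound for Gap Hamming Distance: there is a ℤ₂-equivariant
continuous map `S^k → |S(GHD_k^n)|`, i.e. `coind_{ℤ₂}(S(GHD_k^n)) ≥ k`. -/
theorem ghd_coindex_weak (n k : ℕ) (h : 2 * k < n) :
    ∃ f : EuclideanSpace ℝ (Fin (k + 1)) → ((Fin n → Bool) → ℝ),
      ContinuousOn f (Metric.sphere (0 : EuclideanSpace ℝ (Fin (k + 1))) 1) ∧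
      (∀ x ∈ Metric.sphere (0 : EuclideanSpace ℝ (Fin (k + 1))) 1,
        f x ∈ ghdRealization n k) ∧
      (∀ x ∈ Metric.sphere (0 : EuclideanSpace ℝ (Fin (k + 1))) 1,
        f (-x) = -f x) :=
  ghd_coindex_weak_general n k
end

section
/- (Equivariant map from the Vietoris–Rips complex to the Gap Hamming sign complex.) Let n, k ∈ ℕ with 2k < n. Then there exists a continuous map h : |VR(Q_n,k)| → ℝ^({0,1}^n) such that h(v) ∈ |S(GHD_k^n)| for every v ∈ |VR(Q_n,k)| and h(T v) = −h(v) for every v ∈ |VR(Q_n,k)|, where T is the flip involution. (Concretely, one may take h to be the restriction of the linear map sending e_y to ½(e_{ȳ} − e_y).) In particular coind_{ℤ₂}(S(GHD_k^n)) ≥ coind_{ℤ₂}(VR(Q_n,k)). -/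
open scoped Pointwise

/-- The geometric realization `|VR(Q_n,k)|` of the Vietoris–Rips complex of the
hypercube. -/
noncomputable def vrRealization (n k : ℕ) : Set ((Fin n → Bool) → ℝ) :=
  ⋃ (σ : Finset (Fin n → Bool)) (_ : ∀ x ∈ σ, ∀ y ∈ σ, hammingDist x y ≤ k),
    convexHull ℝ {v | ∃ x ∈ σ, v = Pi.single x (1 : ℝ)}

/-- The flip involution `T` of `ℝ^({0,1}^n)`, determined by `T(e_x) = e_{x̄}`. -/
def flipMap (n : ℕ) : ((Fin n → Bool) → ℝ) →ₗ[ℝ] ((Fin n → Bool) → ℝ) where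
  toFun v := fun x => v (fun i => !(x i))
  map_add' := by intros; rfl
  map_smul' := by intros; rfl

/-- The linear map `e_y ↦ ½(e_{ȳ} − e_y)`. -/
noncomputable def halfFlip (n : ℕ) : ((Fin n → Bool) → ℝ) →ₗ[ℝ] ((Fin n → Bool) → ℝ) where
  toFun v := fun x => (v (fun i => !(x i)) - v x) / 2
  map_add' := by intros u v; funext x; simp [Pi.add_apply]; ring
  map_smul' := by intros c v; funext x; simp [Pi.smul_apply, smul_eq_mul]; ring

lemma ham_compl {n : ℕ} (x y : Fin n → Bool) :
    hammingDist x (fun i => !(y i)) + hammingDist x y = n := by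
  simp only [hammingDist]
  have h1 : ∀ i : Fin n, (x i ≠ !(y i)) ↔ ¬ (x i ≠ y i) := by
    intro i; cases x i <;> cases y i <;> simp
  rw [Finset.filter_congr (fun i _ => h1 i), add_comm,
    Finset.card_filter_add_card_filter_not, Finset.card_univ, Fintype.card_fin]

lemma single_compl {n : ℕ} (y x : Fin n → Bool) :
    (Pi.single y (1:ℝ) : (Fin n → Bool) → ℝ) (fun i => !(x i))
      = (Pi.single (fun i => !(y i)) (1:ℝ) : (Fin n → Bool) → ℝ) x := by
  simp only [Pi.single_apply]
  congr 1
  simp only [eq_iff_iff]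
  constructor
  · intro hh; subst hh; funext i; simp
  · intro hh; subst hh; funext i; simp

/-- There is a continuous map `|VR(Q_n,k)| → |S(GHD_k^n)|` intertwining the
flip involution with the antipodal map; in particular
`coind_{ℤ₂}(S(GHD_k^n)) ≥ coind_{ℤ₂}(VR(Q_n,k))`. -/
theorem vr_to_ghd_equivariant (n k : ℕ) (h : 2 * k < n) :
    ∃ f : ((Fin n → Bool) → ℝ) → ((Fin n → Bool) → ℝ),
      ContinuousOn f (vrRealization n k) ∧
      (∀ v ∈ vrRealization n k, f v ∈ ghdRealization n k) ∧
      (∀ v ∈ vrRealization n k, f (flipMap n v) = -f v) := by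
  refine ⟨halfFlip n, ?_, ?_, ?_⟩
  · apply Continuous.continuousOn
    apply continuous_pi
    intro x
    exact ((continuous_apply (fun i => !(x i))).sub (continuous_apply x)).div_const 2
  · intro v hv
    simp only [vrRealization, Set.mem_iUnion] at hv
    obtain ⟨σ, hσ, hvmem⟩ := hv
    rcases σ.eq_empty_or_nonempty with rfl | ⟨x₀, hx₀⟩
    · rw [show {v : (Fin n → Bool) → ℝ | ∃ x ∈ (∅ : Finset (Fin n → Bool)), v = Pi.single x (1:ℝ)} = ∅ by simp, convexHull_empty] at hvmem
      exact hvmem.elim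
    · have key : v ∈ (halfFlip n) ⁻¹' (-(ghdSimplex n k x₀)) := by
        refine convexHull_min ?_ (((convex_convexHull ℝ _).neg).linear_preimage _) hvmem
        rintro w ⟨y, hy, rfl⟩
        simp only [Set.mem_preimage, Set.mem_neg]
        have hdy : hammingDist x₀ y ≤ k := hσ x₀ hx₀ y hy
        have hdc : n - k ≤ hammingDist x₀ (fun i => !(y i)) := by
          have := ham_compl x₀ y; omega
        have ha : Pi.single y (1:ℝ) ∈ ghdSimplex n k x₀ :=
          subset_convexHull ℝ _ (Or.inl ⟨y, hdy, rfl⟩)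
        have hb : -Pi.single (fun i => !(y i)) (1:ℝ) ∈ ghdSimplex n k x₀ :=
          subset_convexHull ℝ _ (Or.inr ⟨fun i => !(y i), hdc, rfl⟩)
        have hc := (convex_convexHull ℝ _) ha hb (by norm_num : (0:ℝ) ≤ 1/2)
          (by norm_num : (0:ℝ) ≤ 1/2) (by norm_num)
        convert hc using 1
        funext x
        simp only [halfFlip, LinearMap.coe_mk, AddHom.coe_mk, Pi.neg_apply, Pi.add_apply,
          Pi.smul_apply, smul_eq_mul]
        rw [single_compl y x]
        ring
      have := key
      simp only [Set.mem_preimage] at this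
      exact Set.mem_iUnion.2 ⟨x₀, Or.inr this⟩
  · intro v _
    funext x
    simp only [halfFlip, flipMap, LinearMap.coe_mk, AddHom.coe_mk, Pi.neg_apply]
    have : (fun i => !(!(x i))) = x := by funext i; simp
    rw [this]
    ring
end

section
/- (Binomial tail estimate behind the connectivity claim.) Let k, t, t' ∈ ℕ with k ≥ 5, t ≥ 2, k < t' ≤ t, and (k : ℝ) > t/2 + 2·√(t·log t), where log is the natural logarithm. Then ∑_{i=k+1}^{t'} (t' choose i) ≤ 2^{t'} · t^{−8}, and consequently α_{t',k} := 2^{t'−1} / (∑_{i=k+1}^{t'} (t' choose i)) ≥ t^8 / 2 ≥ t + 1. -/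
theorem binomial_tail_bound_aux (x : ℝ) (hx : 6 ≤ x) : x + 1 ≤ x ^ (8:ℕ) / 2 := by
  have hp : x ^ (2:ℕ) ≤ x ^ (8:ℕ) := pow_le_pow_right₀ (by linarith) (by norm_num)
  nlinarith [sq_nonneg (x - 6)]

open Real Finset in
/-- Binomial tail estimate behind the connectivity claim: under the stated
assumptions, `∑_{i=k+1}^{t'} (t' choose i) ≤ 2^{t'}·t^{-8}`, and consequently
`α_{t',k} = 2^{t'-1} / ∑_{i=k+1}^{t'} (t' choose i) ≥ t^8/2 ≥ t + 1`. -/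
theorem binomial_tail_bound (k t t' : ℕ) (hk : 5 ≤ k) (ht : 2 ≤ t)
    (h1 : k < t') (h2 : t' ≤ t)
    (h3 : (t : ℝ) / 2 + 2 * Real.sqrt (t * Real.log t) < k) :
    (∑ i ∈ Finset.Icc (k + 1) t', (t'.choose i : ℝ)) ≤
        2 ^ t' / (t : ℝ) ^ (8 : ℕ) ∧
      (2 : ℝ) ^ (t' - 1) / (∑ i ∈ Finset.Icc (k + 1) t', (t'.choose i : ℝ)) ≥
        (t : ℝ) ^ (8 : ℕ) / 2 ∧
      (t : ℝ) ^ (8 : ℕ) / 2 ≥ (t : ℝ) + 1 := by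
  have ht6 : 6 ≤ t := by omega
  have htR : (6:ℝ) ≤ (t:ℝ) := by exact_mod_cast ht6
  have htpos : (0:ℝ) < t := by linarith
  have hlogt : 0 ≤ Real.log t := Real.log_nonneg (by linarith)
  have hnpos : 0 < t' := by omega
  have hnR : (0:ℝ) < (t':ℝ) := by exact_mod_cast hnpos
  have hntR : (t':ℝ) ≤ (t:ℝ) := by exact_mod_cast h2
  set ε : ℝ := (k:ℝ) - (t':ℝ)/2 with hεdef
  have hsqnn : 0 ≤ Real.sqrt ((t:ℝ) * Real.log t) := Real.sqrt_nonneg _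
  have hε : 2 * Real.sqrt ((t:ℝ) * Real.log t) < ε := by
    simp only [hεdef]; linarith
  have hεpos : 0 < ε := lt_of_le_of_lt (by positivity) hε
  set L : ℝ := 4 * ε / (t':ℝ) with hLdef
  have hL : 0 < L := by positivity
  set S : ℝ := ∑ i ∈ Finset.Icc (k + 1) t', (t'.choose i : ℝ) with hSdef
  -- Chernoff step
  have stepA : S ≤ Real.exp (-(L * k)) * (1 + Real.exp L) ^ t' := by
    have h1' : S ≤ ∑ i ∈ Finset.Icc (k + 1) t',
        Real.exp (-(L * k)) * ((t'.choose i : ℝ) * Real.exp L ^ i) := by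
      apply Finset.sum_le_sum
      intro i hi
      have hik : k + 1 ≤ i := (Finset.mem_Icc.mp hi).1
      have h2' : Real.exp (L * k) ≤ Real.exp L ^ i := by
        rw [← Real.exp_nat_mul]
        apply Real.exp_le_exp.mpr
        have : (k:ℝ) ≤ (i:ℝ) := by exact_mod_cast by omega
        nlinarith
      have hc : (0:ℝ) ≤ (t'.choose i : ℝ) := by positivity
      calc (t'.choose i : ℝ) = Real.exp (-(L*k)) * ((t'.choose i : ℝ) * Real.exp (L*k)) := by
              rw [← mul_assoc, mul_comm (Real.exp (-(L*k))), mul_assoc,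
                ← Real.exp_add]; simp
        _ ≤ _ := by
              apply mul_le_mul_of_nonneg_left _ (Real.exp_nonneg _)
              exact mul_le_mul_of_nonneg_left h2' hc
    have h2' : ∑ i ∈ Finset.Icc (k + 1) t',
        Real.exp (-(L * k)) * ((t'.choose i : ℝ) * Real.exp L ^ i)
        ≤ ∑ i ∈ Finset.range (t' + 1),
        Real.exp (-(L * k)) * ((t'.choose i : ℝ) * Real.exp L ^ i) := by
      apply Finset.sum_le_sum_of_subset_of_nonneg
      · intro i hi
        simp only [Finset.mem_Icc] at hi
        simp only [Finset.mem_range]; omega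
      · intro i _ _; positivity
    have hbin : ∑ i ∈ Finset.range (t' + 1),
        (t'.choose i : ℝ) * Real.exp L ^ i = (1 + Real.exp L) ^ t' := by
      rw [add_comm (1:ℝ) (Real.exp L), add_pow]
      apply Finset.sum_congr rfl
      intro i _
      ring
    calc S ≤ _ := h1'
      _ ≤ _ := h2'
      _ = Real.exp (-(L * k)) * ∑ i ∈ Finset.range (t' + 1),
            (t'.choose i : ℝ) * Real.exp L ^ i := by rw [← Finset.mul_sum]
      _ = _ := by rw [hbin]
  -- Hoeffding lemma step
  have hcosh : 1 + Real.exp L ≤ 2 * Real.exp (L/2 + L^2/8) := by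
    have h := Real.cosh_le_exp_half_sq (L/2)
    rw [Real.cosh_eq] at h
    have e1 : Real.exp (L/2) * Real.exp (-(L/2)) = 1 := by
      rw [← Real.exp_add]; simp
    have e2 : Real.exp (L/2) * Real.exp (L/2) = Real.exp L := by
      rw [← Real.exp_add]; ring_nf
    have e3 : Real.exp (L/2 + L^2/8) = Real.exp (L/2) * Real.exp ((L/2)^2/2) := by
      rw [← Real.exp_add]; ring_nf
    have hp : 0 < Real.exp (L/2) := Real.exp_pos _
    nlinarith [Real.exp_pos (-(L/2))]
  have stepB : Real.exp (-(L * k)) * (1 + Real.exp L) ^ t'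
      ≤ 2 ^ t' * Real.exp (-(2 * ε^2 / t')) := by
    have hpow : (1 + Real.exp L) ^ t' ≤ (2 * Real.exp (L/2 + L^2/8)) ^ t' := by
      apply pow_le_pow_left₀ (by positivity) hcosh
    have hrw : (2 * Real.exp (L/2 + L^2/8)) ^ t'
        = 2 ^ t' * Real.exp ((t':ℝ) * (L/2 + L^2/8)) := by
      rw [mul_pow, ← Real.exp_nat_mul]
    have hexpo : -(L * k) + (t':ℝ) * (L/2 + L^2/8) = -(2 * ε^2 / t') := by
      have hne : (t':ℝ) ≠ 0 := ne_of_gt hnR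
      have hk' : (k:ℝ) = ε + (t':ℝ)/2 := by simp [hεdef]
      rw [hk', hLdef]
      field_simp
      ring
    calc Real.exp (-(L * k)) * (1 + Real.exp L) ^ t'
        ≤ Real.exp (-(L * k)) * (2 ^ t' * Real.exp ((t':ℝ) * (L/2 + L^2/8))) := by
          rw [← hrw]
          exact mul_le_mul_of_nonneg_left hpow (Real.exp_nonneg _)
      _ = 2 ^ t' * Real.exp (-(L * k) + (t':ℝ) * (L/2 + L^2/8)) := by
          rw [Real.exp_add]; ring
      _ = _ := by rw [hexpo]
  -- exponent estimate
  have hε2 : 4 * ((t:ℝ) * Real.log t) ≤ ε^2 := by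
    have h4 : (2 * Real.sqrt ((t:ℝ) * Real.log t))^2 ≤ ε^2 := by
      apply pow_le_pow_left₀ (by positivity) (le_of_lt hε)
    have : (2 * Real.sqrt ((t:ℝ) * Real.log t))^2 = 4 * ((t:ℝ) * Real.log t) := by
      rw [mul_pow, Real.sq_sqrt (by positivity)]; norm_num
    linarith
  have hexp_le : Real.exp (-(2 * ε^2 / t')) ≤ Real.exp (-(8 * Real.log t)) := by
    apply Real.exp_le_exp.mpr
    rw [neg_le_neg_iff, le_div_iff₀ hnR]
    nlinarith
  have hexp_eq : Real.exp (-(8 * Real.log t)) = 1 / (t:ℝ)^(8:ℕ) := by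
    rw [Real.exp_neg, show (8:ℝ) * Real.log t = ((8:ℕ):ℝ) * Real.log t by norm_num,
      Real.exp_nat_mul, Real.exp_log htpos, one_div]
  have main : S ≤ 2 ^ t' / (t:ℝ)^(8:ℕ) := by
    calc S ≤ _ := stepA
      _ ≤ 2 ^ t' * Real.exp (-(2 * ε^2 / t')) := stepB
      _ ≤ 2 ^ t' * Real.exp (-(8 * Real.log t)) := by
          exact mul_le_mul_of_nonneg_left hexp_le (by positivity)
      _ = 2 ^ t' / (t:ℝ)^(8:ℕ) := by rw [hexp_eq]; ring
  have hSpos : 0 < S := by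
    apply Finset.sum_pos
    · intro i hi
      simp only [Finset.mem_Icc] at hi
      exact_mod_cast Nat.choose_pos hi.2
    · exact ⟨k+1, Finset.mem_Icc.mpr ⟨le_refl _, h1⟩⟩
  refine ⟨main, ?_, ?_⟩
  · rw [ge_iff_le, le_div_iff₀ hSpos]
    have h2t : (2:ℝ) ^ t' = 2 ^ (t'-1) * 2 := by
      rw [← pow_succ]
      congr 1
      omega
    have htp : (0:ℝ) < (t:ℝ)^(8:ℕ) := by positivity
    calc (t:ℝ)^(8:ℕ)/2 * S ≤ (t:ℝ)^(8:ℕ)/2 * (2 ^ t' / (t:ℝ)^(8:ℕ)) := by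
          apply mul_le_mul_of_nonneg_left main (by positivity)
      _ = 2 ^ (t'-1) := by rw [h2t]; field_simp
  · exact binomial_tail_bound_aux _ htR
end

section
/- (VC dimension lower bounds the ℤ₂-coindex of the sign complex.) Let A : Fin M → Fin N → ℤ be a partial sign matrix and let S be a finset of columns with |S| = d ≥ 1 which is shattered by A. Then there exists a continuous map f from the unit sphere S^{d−1} (the set {x ∈ EuclideanSpace ℝ (Fin d) : ‖x‖ = 1}) into ℝ^N such that f(x) ∈ |S(A)| and f(−x) = −f(x) for all x ∈ S^{d−1}. In particular VC(A) − 1 ≤ coind_{ℤ₂}(S(A)). -/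
open scoped Pointwise

/-!
The map `x ↦ (∑ₖ xₖ e_{jₖ}) / ‖x‖₁`, where `j₁ < ⋯ < j_d` enumerate `S`, sends the sphere
continuously and oddly onto the boundary of the cross-polytope spanned by `±e_j`, `j ∈ S`.
A point `x` lands in the simplex with vertices `sign(xₖ) e_{jₖ}`, and since `S` is shattered
some row `i` has `A i jₖ = sign(xₖ)` wherever `xₖ ≠ 0`, so this simplex is a face of `σ_i`.
-/

open Function

section CrossMap

variable {ι κ : Type*} [Fintype ι] [DecidableEq κ]

noncomputable def crossMap (e : ι → κ) (x : ι → ℝ) : κ → ℝ :=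
  (∑ k, |x k|)⁻¹ • ∑ k, x k • Pi.single (e k) (1 : ℝ)

lemma sum_abs_pos_of_ne_zero {x : ι → ℝ} (hx : x ≠ 0) : 0 < ∑ k, |x k| := by
  obtain ⟨k, hk⟩ := Function.ne_iff.mp hx
  exact Finset.sum_pos' (fun k _ => abs_nonneg (x k)) ⟨k, Finset.mem_univ k, abs_pos.mpr hk⟩

lemma crossMap_neg (e : ι → κ) (x : ι → ℝ) : crossMap e (-x) = -crossMap e x := by
  simp only [crossMap, Pi.neg_apply, abs_neg, neg_smul, Finset.sum_neg_distrib, smul_neg]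

lemma continuousOn_crossMap (e : ι → κ) : ContinuousOn (crossMap e) {x | x ≠ 0} := by
  have hnorm : Continuous fun x : ι → ℝ => ∑ k, |x k| := by fun_prop
  exact (hnorm.continuousOn.inv₀ fun x hx => (sum_abs_pos_of_ne_zero hx).ne').smul
    (by fun_prop)

lemma crossMap_eq_centerMass (e : ι → κ) (x : ι → ℝ) :
    crossMap e x = Finset.univ.centerMass (fun k => |x k|)
      (fun k => (SignType.sign (x k) : ℝ) • Pi.single (e k) (1 : ℝ)) := by
  simp only [crossMap, Finset.centerMass, smul_smul, mul_comm |x _|, sign_mul_abs]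

end CrossMap

lemma crossMap_mem_rowSimplex {ι : Type*} [Fintype ι] {M N : ℕ} (A : Fin M → Fin N → ℤ)
    (i : Fin M) (e : ι → Fin N) {x : ι → ℝ} (hx : x ≠ 0)
    (hpos : ∀ k, 0 < x k → A i (e k) = 1) (hneg : ∀ k, x k < 0 → A i (e k) = -1) :
    crossMap e x ∈ rowSimplex A i := by
  rw [crossMap_eq_centerMass, ← Finset.centerMass_filter_ne_zero]
  refine Finset.centerMass_mem_convexHull _ (fun k _ => abs_nonneg (x k)) ?_ fun k hk => ?_
  · rw [Finset.sum_filter_ne_zero]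
    exact sum_abs_pos_of_ne_zero hx
  have hk : x k ≠ 0 := by simpa using (Finset.mem_filter.mp hk).2
  rcases hk.lt_or_gt with hk | hk
  · exact Or.inr ⟨e k, hneg k hk, by simp [hk]⟩
  · exact Or.inl ⟨e k, hpos k hk, by simp [hk]⟩

lemma exists_row_signs_of_shatters {ρ κ ι : Type*} (A : ρ → κ → ℤ) (S : Finset κ)
    (hshatter : ∀ P : κ → ℤ, (∀ j ∈ S, P j = 1 ∨ P j = -1) → ∃ i, ∀ j ∈ S, A i j = P j)
    {e : ι → κ} (he : Injective e) (heS : ∀ k, e k ∈ S) (x : ι → ℝ) :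
    ∃ i, (∀ k, 0 < x k → A i (e k) = 1) ∧ (∀ k, x k < 0 → A i (e k) = -1) := by
  classical
  let P : κ → ℤ := fun j => if ∃ k, e k = j ∧ x k < 0 then -1 else 1
  obtain ⟨i, hi⟩ := hshatter P fun j _ => by unfold P; split_ifs <;> simp
  refine ⟨i, fun k hk => ?_, fun k hk => ?_⟩
  · rw [hi _ (heS k)]
    refine if_neg ?_
    rintro ⟨k', hk', hneg⟩
    exact (he hk' ▸ hneg).not_gt hk
  · rw [hi _ (heS k)]
    exact if_pos ⟨k, rfl, hk⟩

theorem vc_le_coindex_general {M N : ℕ} (A : Fin M → Fin N → ℤ)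
    (S : Finset (Fin N)) (d : ℕ) (hcard : S.card = d)
    (hshatter : ∀ P : Fin N → ℤ, (∀ j ∈ S, P j = 1 ∨ P j = -1) →
      ∃ i, ∀ j ∈ S, A i j = P j) :
    ∃ f : EuclideanSpace ℝ (Fin d) → (Fin N → ℝ),
      ContinuousOn f (Metric.sphere (0 : EuclideanSpace ℝ (Fin d)) 1) ∧
      (∀ x ∈ Metric.sphere (0 : EuclideanSpace ℝ (Fin d)) 1,
        f x ∈ signComplexReal A) ∧
      (∀ x ∈ Metric.sphere (0 : EuclideanSpace ℝ (Fin d)) 1,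
        f (-x) = -f x) := by
  let e := S.orderEmbOfFin hcard
  have hne {x : EuclideanSpace ℝ (Fin d)} (hx : x ∈ Metric.sphere 0 1) : x.ofLp ≠ 0 :=
    (WithLp.ofLp_eq_zero 2).not.mpr (ne_zero_of_mem_unit_sphere ⟨x, hx⟩)
  refine ⟨fun x => crossMap e x.ofLp, ?_, fun x hx => ?_, fun x _ => ?_⟩
  · exact (continuousOn_crossMap e).comp (PiLp.continuous_ofLp 2 _).continuousOn
      fun x hx => hne hx
  · obtain ⟨i, hpos, hneg⟩ := exists_row_signs_of_shatters A S hshatter e.injective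
      (S.orderEmbOfFin_mem hcard) x.ofLp
    exact Set.mem_iUnion.mpr ⟨i, Or.inl (crossMap_mem_rowSimplex A i e (hne hx) hpos hneg)⟩
  · simp only [WithLp.ofLp_neg, crossMap_neg]

/-- VC dimension lower bounds the ℤ₂-coindex of the sign complex: if a set of
`d ≥ 1` columns is shattered by `A`, then there is a ℤ₂-equivariant continuous
map `S^{d-1} → |S(A)|`; in particular `VC(A) - 1 ≤ coind_{ℤ₂}(S(A))`. -/
theorem vc_le_coindex {M N : ℕ} (A : Fin M → Fin N → ℤ)
    (hA : ∀ i j, A i j = -1 ∨ A i j = 0 ∨ A i j = 1)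
    (S : Finset (Fin N)) (d : ℕ) (hd : 1 ≤ d) (hcard : S.card = d)
    (hshatter : ∀ P : Fin N → ℤ, (∀ j ∈ S, P j = 1 ∨ P j = -1) →
      ∃ i, ∀ j ∈ S, A i j = P j) :
    ∃ f : EuclideanSpace ℝ (Fin d) → (Fin N → ℝ),
      ContinuousOn f (Metric.sphere (0 : EuclideanSpace ℝ (Fin d)) 1) ∧
      (∀ x ∈ Metric.sphere (0 : EuclideanSpace ℝ (Fin d)) 1,
        f x ∈ signComplexReal A) ∧
      (∀ x ∈ Metric.sphere (0 : EuclideanSpace ℝ (Fin d)) 1,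
        f (-x) = -f x) :=
  vc_le_coindex_general A S d hcard hshatter
end

section
/- (Chain height bounds the ℤ₂-index.) Let A : Fin M → Fin N → ℤ be a partial sign matrix having at least one nonzero entry, and let h(A) be its height. Then there exists a continuous map f : |S(A)| → ℝ^(2·h(A)) such that f(x) ≠ 0 for all x ∈ |S(A)| and f(−x) = −f(x) whenever x and −x both lie in |S(A)|; i.e., there is a ℤ₂-equivariant continuous map |S(A)| → S^{2h(A)−1}, so ind_{ℤ₂}(S(A)) ≤ 2·h(A) − 1. -/
open scoped Pointwise

/-- The intersection family `I(A)`: all nonempty sets expressible as an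
intersection of finitely many (at least one) of the sets
`R_i^+ = {j : A i j = 1}` and `R_i^- = {j : A i j = -1}`. -/
def interFamily {M N : ℕ} (A : Fin M → Fin N → ℤ) : Set (Set (Fin N)) :=
  {S | S.Nonempty ∧ ∃ F : Finset (Fin M × Bool), F.Nonempty ∧
    S = ⋂ p ∈ F, {j | A p.1 j = if p.2 then 1 else -1}}

/-!
A nonzero sign vector `s : Fin N → SignType` stands for the face `conv {s j • e_j}` of the
crosspolytope, and the `vertexWeight`s are unnormalised barycentric coordinates on its barycentric subdivision.
Give each face `s` of `S(A)` a label in `±{1, …, 2h}`: with `a`, `b` the depths in `I(A)` (length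
of a longest chain above) of the closures of its positive and negative parts, the label is
`±(2 min a b + 1)` when `a ≠ b`, signed by the shallower side, and `±(2a + 2)` when `a = b`, signed
by an arbitrary tie-break. The labelling is odd, and since depth is strictly antitone on `I(A)`,
nested faces never carry opposite labels. Mapping each vertex of the subdivision to the vertex of
the crosspolytope in `ℝ^{2h}` named by its label gives an odd continuous map. At a point `x` of
`|S(A)|`, every face with positive weight contains the face spanned by the coordinates of largest
absolute value, so in the coordinate named by the label of that face all contributions have the
same sign and the map does not vanish.
-/

namespace SignComplex

section Chains

variable {β : Type*} [PartialOrder β]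

def chainLengths (𝓕 : Set β) : Set ℕ :=
  {k | ∃ c : Fin k → β, StrictMono c ∧ ∀ t, c t ∈ 𝓕}

noncomputable def maxChainLength (𝓕 : Set β) : ℕ := sSup (chainLengths 𝓕)

noncomputable def depth (𝓕 : Set β) (b : β) : ℕ := maxChainLength {c ∈ 𝓕 | b < c}

lemma chainLengths_mono {𝓕 𝓖 : Set β} (h : 𝓕 ⊆ 𝓖) : chainLengths 𝓕 ⊆ chainLengths 𝓖 :=
  fun _ ⟨c, hc, hc𝓕⟩ ↦ ⟨c, hc, fun t ↦ h (hc𝓕 t)⟩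

lemma zero_mem_chainLengths (𝓕 : Set β) : 0 ∈ chainLengths 𝓕 :=
  ⟨Fin.elim0, fun t ↦ t.elim0, fun t ↦ t.elim0⟩

variable [Finite β]

lemma bddAbove_chainLengths (𝓕 : Set β) : BddAbove (chainLengths 𝓕) :=
  ⟨Nat.card β, fun k ⟨c, hc, _⟩ ↦ by
    simpa using Nat.card_le_card_of_injective c hc.injective⟩

lemma maxChainLength_mem (𝓕 : Set β) : maxChainLength 𝓕 ∈ chainLengths 𝓕 :=
  Nat.sSup_mem ⟨0, zero_mem_chainLengths 𝓕⟩ (bddAbove_chainLengths 𝓕)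

lemma maxChainLength_mono {𝓕 𝓖 : Set β} (h : 𝓕 ⊆ 𝓖) : maxChainLength 𝓕 ≤ maxChainLength 𝓖 :=
  le_csSup (bddAbove_chainLengths 𝓖) (chainLengths_mono h (maxChainLength_mem 𝓕))

lemma depth_le {𝓕 : Set β} {n : ℕ} (hn : n ∈ upperBounds (chainLengths 𝓕)) (b : β) :
    depth 𝓕 b ≤ n :=
  hn (chainLengths_mono (fun _ hc ↦ hc.1) (maxChainLength_mem _))

lemma depth_antitone (𝓕 : Set β) : Antitone (depth 𝓕) :=
  fun _ _ hbb' ↦ maxChainLength_mono fun _ hc ↦ ⟨hc.1, hbb'.trans_lt hc.2⟩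

lemma depth_lt_depth {𝓕 : Set β} {b c : β} (hbc : b < c) (hc : c ∈ 𝓕) :
    depth 𝓕 c < depth 𝓕 b := by
  obtain ⟨d, hd, hd𝓕⟩ := maxChainLength_mem {e ∈ 𝓕 | c < e}
  have hcons : depth 𝓕 c + 1 ∈ chainLengths {e ∈ 𝓕 | b < e} := by
    refine ⟨Fin.cons c d, Fin.strictMono_cons.2 ⟨fun t ↦ (hd𝓕 t).2, hd⟩, Fin.cases ?_ ?_⟩
    · exact ⟨hc, hbc⟩
    · exact fun t ↦ ⟨(hd𝓕 t).1, hbc.trans (hd𝓕 t).2⟩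
  exact Nat.lt_of_succ_le (le_csSup (bddAbove_chainLengths _) hcons)

lemma eq_of_le_of_depth_eq {𝓕 : Set β} {b c : β} (hbc : b ≤ c) (hc : c ∈ 𝓕)
    (h : depth 𝓕 c = depth 𝓕 b) : b = c := by
  by_contra hne
  exact (depth_lt_depth (lt_of_le_of_ne hbc hne) hc).ne h

end Chains

section Closure

variable {β : Type*} [CompleteLattice β]

/-- `⊤` when no member of `𝓖` lies above `b`. -/
def closureIn (𝓖 : Set β) (b : β) : β := sInf {c ∈ 𝓖 | b ≤ c}

lemma le_closureIn (𝓖 : Set β) (b : β) : b ≤ closureIn 𝓖 b :=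
  le_sInf fun _ hc ↦ hc.2

lemma closureIn_le {𝓖 : Set β} {b c : β} (hc : c ∈ 𝓖) (hbc : b ≤ c) : closureIn 𝓖 b ≤ c :=
  sInf_le ⟨hc, hbc⟩

lemma closureIn_mono (𝓖 : Set β) : Monotone (closureIn 𝓖) :=
  fun _ _ hbb' ↦ sInf_le_sInf fun _ hc ↦ ⟨hc.1, hbb'.trans hc.2⟩

lemma closureIn_mem [Finite β] {𝓖 : Set β} (h𝓖 : InfClosed 𝓖) {b c : β} (hc : c ∈ 𝓖)
    (hbc : b ≤ c) : closureIn 𝓖 b ∈ 𝓖 :=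
  h𝓖.sInf_mem_of_nonempty (Set.toFinite _) ⟨c, hc, hbc⟩ fun _ hd ↦ hd.1

end Closure

def sideLabel (a b : ℕ) (p : Bool) : ℤ :=
  if a < b then 2 * a + 1
  else if b < a then -(2 * b + 1)
  else if p then 2 * a + 2 else -(2 * a + 2)

lemma sideLabel_swap {a b : ℕ} {p q : Bool} (h : a = b → q = !p) :
    sideLabel b a q = -sideLabel a b p := by
  unfold sideLabel
  split_ifs <;> grind

lemma natAbs_sideLabel_le (a b : ℕ) (p : Bool) :
    (sideLabel a b p).natAbs ≤ 2 * min a b + 2 := by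
  unfold sideLabel
  split_ifs <;> omega

lemma sideLabel_ne_zero (a b : ℕ) (p : Bool) : sideLabel a b p ≠ 0 := by
  unfold sideLabel
  split_ifs <;> omega

lemma sideLabel_ne_neg {a b a' b' : ℕ} {p p' : Bool} (ha : a' ≤ a) (hb : b' ≤ b)
    (htie : a' = a → b' = b → p' = p) : sideLabel a' b' p' ≠ -sideLabel a b p := by
  unfold sideLabel
  split_ifs <;> grind

/-- Coordinate `k` of the vertex `± e_k` of the crosspolytope that the label `±(k + 1)` names. -/
def labelCoeff (n : ℤ) (k : ℕ) : ℝ :=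
  if n = k + 1 then 1 else if n = -(k + 1) then -1 else 0

lemma labelCoeff_neg (n : ℤ) (k : ℕ) : labelCoeff (-n) k = -labelCoeff n k := by
  unfold labelCoeff
  split_ifs <;> (try norm_num) <;> omega

lemma sum_labelCoeff_mul_pos {σ : Type*} [Fintype σ] {ν : σ → ℤ} {w : σ → ℝ}
    (hw : ∀ τ, 0 ≤ w τ) {τ₀ : σ} {k : ℕ} (hτ₀ : 0 < w τ₀) (hk : ν τ₀ = k + 1)
    (hanti : ∀ τ, 0 < w τ → ν τ ≠ -(k + 1)) : 0 < ∑ τ, labelCoeff (ν τ) k * w τ := by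
  refine Finset.sum_pos' (fun τ _ ↦ ?_) ⟨τ₀, Finset.mem_univ _, by simpa [labelCoeff, hk]⟩
  rcases (hw τ).eq_or_lt with h0 | hpos
  · simp [← h0]
  · have := hanti τ hpos
    unfold labelCoeff
    split_ifs <;> positivity

lemma sum_labelCoeff_mul_ne_zero {σ : Type*} [Fintype σ] {ν : σ → ℤ} {w : σ → ℝ}
    (hw : ∀ τ, 0 ≤ w τ) {τ₀ : σ} (hτ₀ : 0 < w τ₀) (hν₀ : ν τ₀ ≠ 0)
    (hanti : ∀ τ, 0 < w τ → ν τ ≠ -ν τ₀) :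
    ∑ τ, labelCoeff (ν τ) ((ν τ₀).natAbs - 1) * w τ ≠ 0 := by
  set k := (ν τ₀).natAbs - 1
  rcases Int.natAbs_eq (ν τ₀) with h | h
  · refine (sum_labelCoeff_mul_pos hw hτ₀ (by omega) fun τ hτ ↦ ?_).ne'
    have := hanti τ hτ
    omega
  · have hpos := sum_labelCoeff_mul_pos (ν := fun τ ↦ -ν τ) hw hτ₀ (k := k) (by omega)
      fun τ hτ ↦ by have := hanti τ hτ; omega
    simp only [labelCoeff_neg, neg_mul, Finset.sum_neg_distrib, neg_pos] at hpos
    exact hpos.ne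

section Crosspolytope

variable {ι : Type*}

def offSupport (s : ι → SignType) (x : ι → ℝ) : ι → ℝ :=
  fun j ↦ if s j = 0 then x j else 0

lemma offSupport_neg (s : ι → SignType) (x : ι → ℝ) :
    offSupport (-s) (-x) = -offSupport s x := by
  ext j
  by_cases hj : s j = 0 <;> simp [offSupport, hj]

variable [Fintype ι]

def supportFinset (s : ι → SignType) : Finset ι := {j | s j ≠ 0}

/-- The length of the interval of thresholds `t ≥ 0` for which `s` is the sign pattern of the
coordinates of `x` exceeding `t` in absolute value. -/
noncomputable def vertexWeight (s : ι → SignType) (x : ι → ℝ) : ℝ :=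
  if h : (supportFinset s).Nonempty then
    max 0 ((supportFinset s).inf' h (fun j ↦ s j * x j) - ‖offSupport s x‖)
  else 0

noncomputable def topSigns (x : ι → ℝ) : ι → SignType :=
  fun j ↦ if |x j| = ‖x‖ then SignType.sign (x j) else 0

lemma coe_mul_le_abs (ε : SignType) (a : ℝ) : ε * a ≤ |a| := by
  cases ε <;> simp [le_abs_self, neg_le_abs]

lemma eq_sign_of_mul_pos {ε : SignType} {a : ℝ} (h : 0 < ε * a) : ε = SignType.sign a := by
  cases ε <;> simp_all [sign_pos, sign_neg]

lemma supportFinset_neg (s : ι → SignType) : supportFinset (-s) = supportFinset s := by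
  simp [supportFinset]

lemma vertexWeight_nonneg (s : ι → SignType) (x : ι → ℝ) : 0 ≤ vertexWeight s x := by
  unfold vertexWeight
  split_ifs
  exacts [le_max_left _ _, le_rfl]

lemma continuous_vertexWeight (s : ι → SignType) : Continuous (vertexWeight s) := by
  unfold vertexWeight offSupport
  split_ifs with h
  · refine continuous_const.max (.sub ?_ (continuous_pi fun j ↦ ?_).norm)
    · exact .finset_inf'_apply h fun j _ ↦ continuous_const.mul (continuous_apply j)
    · split_ifs
      exacts [continuous_apply j, continuous_const]
  · exact continuous_const

lemma vertexWeight_neg (s : ι → SignType) (x : ι → ℝ) :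
    vertexWeight (-s) (-x) = vertexWeight s x := by
  simp only [vertexWeight, supportFinset_neg, offSupport_neg, norm_neg, Pi.neg_apply,
    SignType.coe_neg, neg_mul_neg]

lemma mem_supportFinset_topSigns {x : ι → ℝ} (hx : x ≠ 0) {j : ι} :
    j ∈ supportFinset (topSigns x) ↔ |x j| = ‖x‖ := by
  by_cases hj : |x j| = ‖x‖
  · have : x j ≠ 0 := by
      rintro h
      rw [h, abs_zero, eq_comm, norm_eq_zero] at hj
      exact hx hj
    simp [supportFinset, topSigns, hj, this]
  · simp [supportFinset, topSigns, hj]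

lemma supportFinset_topSigns_nonempty {x : ι → ℝ} (hx : x ≠ 0) :
    (supportFinset (topSigns x)).Nonempty := by
  have : Nonempty ι := by
    by_contra h
    exact hx (funext fun j ↦ (h ⟨j⟩).elim)
  obtain ⟨j, hj⟩ := (IsGreatest.pi_norm x).1
  exact ⟨j, (mem_supportFinset_topSigns hx).2 hj⟩

lemma topSigns_eq_sign {x : ι → ℝ} {j : ι} (hj : topSigns x j ≠ 0) :
    topSigns x j = SignType.sign (x j) := by
  unfold topSigns at *
  split_ifs at * with h
  · rfl
  · exact absurd rfl hj

lemma vertexWeight_topSigns_pos {x : ι → ℝ} (hx : x ≠ 0) :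
    0 < vertexWeight (topSigns x) x := by
  have hpos : 0 < ‖x‖ := norm_pos_iff.2 hx
  have hne := supportFinset_topSigns_nonempty hx
  have htop : ∀ j ∈ supportFinset (topSigns x), topSigns x j * x j = ‖x‖ := by
    intro j hj
    rw [mem_supportFinset_topSigns hx] at hj
    rw [topSigns, if_pos hj, sign_mul_self, hj]
  have hoff : ‖offSupport (topSigns x) x‖ < ‖x‖ := by
    refine (pi_norm_lt_iff hpos).2 fun j ↦ ?_
    unfold offSupport
    split_ifs with hj
    · refine lt_of_le_of_ne (norm_le_pi_norm x j) fun h ↦ ?_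
      exact (Finset.mem_filter.1 ((mem_supportFinset_topSigns hx).2 h)).2 hj
    · simpa using hpos
  rw [vertexWeight, dif_pos hne, Finset.inf'_congr hne rfl htop, Finset.inf'_const]
  exact lt_max_of_lt_right (sub_pos.2 hoff)

lemma eq_topSigns_of_vertexWeight_pos {s : ι → SignType} {x : ι → ℝ}
    (hs : 0 < vertexWeight s x) {j : ι} (hj : topSigns x j ≠ 0) : s j = topSigns x j := by
  have hjmax : |x j| = ‖x‖ := by
    by_contra h
    simp [topSigns, h] at hj
  unfold vertexWeight at hs
  split_ifs at hs with hne
  · have hgap : ∀ i ∈ supportFinset s, ‖offSupport s x‖ < s i * x i := by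
      rw [← Finset.lt_inf'_iff hne, ← sub_pos]
      simpa using hs
    have hjs : j ∈ supportFinset s := by
      by_contra hjs
      have hsj : s j = 0 := by simpa [supportFinset] using hjs
      obtain ⟨i, hi⟩ := hne
      have hoff : |x j| ≤ ‖offSupport s x‖ := by
        simpa [offSupport, hsj] using norm_le_pi_norm (offSupport s x) j
      have hxi : |x i| ≤ ‖x‖ := by simpa using norm_le_pi_norm x i
      linarith [hgap i hi, coe_mul_le_abs (s i) (x i)]
    rw [topSigns, if_pos hjmax]
    exact eq_sign_of_mul_pos ((norm_nonneg _).trans_lt (hgap j hjs))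
  · exact (lt_irrefl _ hs).elim

variable [DecidableEq ι]

/-- The piecewise linear map sending the vertex `s` of the barycentric subdivision of the
crosspolytope to the vertex of the target crosspolytope named by the label `ν s`. -/
noncomputable def labelMap (ν : (ι → SignType) → ℤ) (n : ℕ) (x : ι → ℝ) : Fin n → ℝ :=
  fun k ↦ ∑ s, labelCoeff (ν s) k * vertexWeight s x

lemma continuous_labelMap (ν : (ι → SignType) → ℤ) (n : ℕ) : Continuous (labelMap ν n) :=
  continuous_pi fun _ ↦ continuous_finsetSum _ fun s _ ↦
    continuous_const.mul (continuous_vertexWeight s)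

lemma labelMap_neg {ν : (ι → SignType) → ℤ} (hν : ∀ s, ν (-s) = -ν s) (n : ℕ)
    (x : ι → ℝ) : labelMap ν n (-x) = -labelMap ν n x := by
  ext k
  simp only [labelMap, Pi.neg_apply, ← Finset.sum_neg_distrib]
  refine Fintype.sum_equiv (Equiv.neg _) _ _ fun s ↦ ?_
  rw [Equiv.neg_apply, hν, labelCoeff_neg, ← vertexWeight_neg s (-x), neg_neg, neg_mul, neg_neg]

lemma labelMap_ne_zero {ν : (ι → SignType) → ℤ} {n : ℕ} {x : ι → ℝ} (hx : x ≠ 0)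
    (hν : ν (topSigns x) ≠ 0) (hn : (ν (topSigns x)).natAbs ≤ n)
    (hanti : ∀ s, (∀ j, topSigns x j ≠ 0 → s j = topSigns x j) → ν s ≠ -ν (topSigns x)) :
    labelMap ν n x ≠ 0 := by
  have hk : (ν (topSigns x)).natAbs - 1 < n := by omega
  intro h0
  refine sum_labelCoeff_mul_ne_zero (vertexWeight_nonneg · x) (vertexWeight_topSigns_pos hx) hν
    (fun s hs ↦ hanti s fun j ↦ eq_topSigns_of_vertexWeight_pos hs) ?_
  exact congrFun h0 ⟨_, hk⟩

end Crosspolytope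

lemma convex_setOf_forall_mem_imp {ι : Type*} {I : Set ℝ} (hI : Convex ℝ Iᶜ) (p : ι → Prop) :
    Convex ℝ {y : ι → ℝ | ∀ j, y j ∈ I → p j} := by
  have : {y : ι → ℝ | ∀ j, y j ∈ I → p j} = {j | ¬p j}.pi fun _ ↦ Iᶜ := by
    ext y
    simp only [Set.mem_pi, Set.mem_compl_iff]
    exact forall_congr' fun j ↦ not_imp_not.symm
  exact this ▸ convex_pi fun _ _ ↦ hI

section SignMatrix

variable {M N : ℕ} (A : Fin M → Fin N → ℤ)

def rowSet (i : Fin M) (b : Bool) : Set (Fin N) := {j | A i j = if b then 1 else -1}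

/-- Adding `∅` makes `I(A)` closed under all binary intersections. -/
def sideFamily : Set (Set (Fin N)) := insert ∅ (interFamily A)

lemma rowSet_mem_sideFamily (i : Fin M) (b : Bool) : rowSet A i b ∈ sideFamily A := by
  rcases (rowSet A i b).eq_empty_or_nonempty with h | h
  · exact .inl h
  · exact .inr ⟨h, {(i, b)}, Finset.singleton_nonempty _, by simp [rowSet]⟩

lemma infClosed_sideFamily : InfClosed (sideFamily A) := by
  rintro S hS T hT
  rcases (S ∩ T).eq_empty_or_nonempty with h | h
  · exact .inl h
  obtain rfl | ⟨-, F, hF, rfl⟩ := hS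
  · simp at h
  obtain rfl | ⟨-, G, -, rfl⟩ := hT
  · simp at h
  refine .inr ⟨h, F ∪ G, hF.mono Finset.subset_union_left, ?_⟩
  exact (Finset.set_biInter_inter F G _).symm

def posPart (s : Fin N → SignType) : Set (Fin N) := {j | s j = 1}

/-- The face `conv {s j • e_j}` of the crosspolytope lies in some `σ_i` or `-σ_i`. -/
def IsFace (s : Fin N → SignType) : Prop :=
  s ≠ 0 ∧ ∃ i b, posPart s ⊆ rowSet A i b ∧ posPart (-s) ⊆ rowSet A i !b

noncomputable def sideClosure (s : Fin N → SignType) : Set (Fin N) :=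
  closureIn (sideFamily A) (posPart s)

noncomputable def sideDepth (s : Fin N → SignType) : ℕ := depth (interFamily A) (sideClosure A s)

/-- Any injection will do: it only breaks ties between the two sides of a face. -/
noncomputable def tieCode : Set (Fin N) → ℕ := (Countable.exists_injective_nat _).choose

lemma tieCode_injective : Function.Injective (tieCode (N := N)) :=
  (Countable.exists_injective_nat _).choose_spec

open Classical in
noncomputable def faceLabel (s : Fin N → SignType) : ℤ :=
  if IsFace A s then
    sideLabel (sideDepth A s) (sideDepth A (-s))
      (tieCode (sideClosure A s) < tieCode (sideClosure A (-s)))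
  else 0

variable {A}

lemma IsFace.neg {s : Fin N → SignType} (hs : IsFace A s) : IsFace A (-s) := by
  obtain ⟨hs0, i, b, hpos, hneg⟩ := hs
  refine ⟨fun h ↦ hs0 (funext fun j ↦ SignType.neg_eq_zero_iff.1 (congrFun h j)), i, !b, hneg, ?_⟩
  simpa using hpos

lemma isFace_neg_iff {s : Fin N → SignType} : IsFace A (-s) ↔ IsFace A s :=
  ⟨fun h ↦ neg_neg s ▸ h.neg, IsFace.neg⟩

lemma posPart_nonempty_or {s : Fin N → SignType} (hs : s ≠ 0) :
    (posPart s).Nonempty ∨ (posPart (-s)).Nonempty := by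
  obtain ⟨j, hj⟩ := Function.ne_iff.1 hs
  cases h : s j
  · exact absurd h hj
  · exact .inr ⟨j, by simp [posPart, h]⟩
  · exact .inl ⟨j, h⟩

lemma posPart_mono {s s' : Fin N → SignType} (h : ∀ j, s j ≠ 0 → s' j = s j) :
    posPart s ⊆ posPart s' :=
  fun j hj ↦ (h j (by simp [show s j = 1 from hj])).trans hj

lemma posPart_subset_sideClosure (s : Fin N → SignType) : posPart s ⊆ sideClosure A s :=
  le_closureIn _ _

lemma sideClosure_subset_rowSet {s : Fin N → SignType} {i : Fin M} {b : Bool}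
    (h : posPart s ⊆ rowSet A i b) : sideClosure A s ⊆ rowSet A i b :=
  closureIn_le (rowSet_mem_sideFamily A i b) h

lemma sideClosure_mem {s : Fin N → SignType} (hs : IsFace A s) :
    sideClosure A s ∈ sideFamily A := by
  obtain ⟨-, i, b, hpos, -⟩ := hs
  exact closureIn_mem (infClosed_sideFamily A) (rowSet_mem_sideFamily A i b) hpos

lemma sideDepth_lt_depth_empty {s : Fin N → SignType} (hs : IsFace A s)
    (hne : (posPart s).Nonempty) : sideDepth A s < depth (interFamily A) ∅ := by
  have hcl : (sideClosure A s).Nonempty := hne.mono (posPart_subset_sideClosure s)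
  refine depth_lt_depth hcl.empty_ssubset ?_
  exact (sideClosure_mem hs).resolve_left hcl.ne_empty

lemma sideDepth_of_posPart_eq_empty {s : Fin N → SignType} (h : posPart s = ∅) :
    sideDepth A s = depth (interFamily A) ∅ := by
  have : sideClosure A s = ∅ := Set.subset_empty_iff.1 (closureIn_le (.inl rfl) h.subset)
  rw [sideDepth, this]

lemma min_sideDepth_lt {s : Fin N → SignType} (hs : IsFace A s) :
    min (sideDepth A s) (sideDepth A (-s)) < depth (interFamily A) ∅ := by
  rcases posPart_nonempty_or hs.1 with h | h
  · exact min_lt_of_left_lt (sideDepth_lt_depth_empty hs h)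
  · exact min_lt_of_right_lt (sideDepth_lt_depth_empty hs.neg h)

lemma posPart_nonempty_of_sideDepth_eq {s : Fin N → SignType} (hs : IsFace A s)
    (h : sideDepth A s = sideDepth A (-s)) : (posPart s).Nonempty := by
  by_contra hempty
  have := sideDepth_lt_depth_empty hs.neg ((posPart_nonempty_or hs.1).resolve_left hempty)
  rw [← h, sideDepth_of_posPart_eq_empty (Set.not_nonempty_iff_eq_empty.1 hempty)] at this
  exact lt_irrefl _ this

lemma sideClosure_ne_of_sideDepth_eq {s : Fin N → SignType} (hs : IsFace A s)
    (h : sideDepth A s = sideDepth A (-s)) : sideClosure A s ≠ sideClosure A (-s) := by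
  obtain ⟨j, hj⟩ := posPart_nonempty_of_sideDepth_eq hs h
  obtain ⟨-, i, b, hpos, hneg⟩ := hs
  intro heq
  have h1 := sideClosure_subset_rowSet hpos (posPart_subset_sideClosure s hj)
  have h2 := sideClosure_subset_rowSet hneg (heq ▸ posPart_subset_sideClosure s hj)
  cases b <;> simp_all [rowSet]

lemma sideClosure_eq_of_sideDepth_eq {s s' : Fin N → SignType} (hs' : IsFace A s')
    (hsub : posPart s ⊆ posPart s') (h : sideDepth A s' = sideDepth A s) :
    sideClosure A s = sideClosure A s' := by
  have hle : sideClosure A s ⊆ sideClosure A s' := closureIn_mono _ hsub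
  rcases sideClosure_mem hs' with hempty | hmem
  · rw [hempty] at hle ⊢
    exact Set.subset_empty_iff.1 hle
  · exact eq_of_le_of_depth_eq hle hmem h

lemma faceLabel_neg (s : Fin N → SignType) : faceLabel A (-s) = -faceLabel A s := by
  by_cases hs : IsFace A s
  · rw [faceLabel, faceLabel, if_pos hs, if_pos hs.neg, neg_neg]
    refine sideLabel_swap fun h ↦ ?_
    have hne := (tieCode_injective (N := N)).ne (sideClosure_ne_of_sideDepth_eq hs h)
    simp only [Bool.eq_not_iff, ne_eq, decide_eq_decide]
    omega
  · rw [faceLabel, faceLabel, if_neg hs, if_neg (isFace_neg_iff.not.2 hs), neg_zero]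

lemma faceLabel_ne_zero {s : Fin N → SignType} (hs : IsFace A s) : faceLabel A s ≠ 0 := by
  rw [faceLabel, if_pos hs]
  exact sideLabel_ne_zero _ _ _

lemma natAbs_faceLabel_le {s : Fin N → SignType} (hs : IsFace A s) :
    (faceLabel A s).natAbs ≤ 2 * depth (interFamily A) ∅ := by
  rw [faceLabel, if_pos hs]
  have := natAbs_sideLabel_le (sideDepth A s) (sideDepth A (-s))
    (tieCode (sideClosure A s) < tieCode (sideClosure A (-s)))
  have := min_sideDepth_lt hs
  omega

lemma faceLabel_ne_neg {s s' : Fin N → SignType} (hs : IsFace A s)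
    (hss' : ∀ j, s j ≠ 0 → s' j = s j) : faceLabel A s' ≠ -faceLabel A s := by
  by_cases hs' : ¬IsFace A s'
  · rw [faceLabel, if_neg hs']
    exact (neg_ne_zero.2 (faceLabel_ne_zero hs)).symm
  rw [not_not] at hs'
  have hpos : posPart s ⊆ posPart s' := posPart_mono hss'
  have hneg : posPart (-s) ⊆ posPart (-s') :=
    posPart_mono fun j hj ↦ by simp [hss' j (by simpa using hj)]
  rw [faceLabel, faceLabel, if_pos hs, if_pos hs']
  refine sideLabel_ne_neg (depth_antitone _ (closureIn_mono _ hpos))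
    (depth_antitone _ (closureIn_mono _ hneg)) fun ha hb ↦ ?_
  rw [sideClosure_eq_of_sideDepth_eq hs' hpos ha, sideClosure_eq_of_sideDepth_eq hs'.neg hneg hb]

lemma rowSimplex_subset (i : Fin M) : rowSimplex A i ⊆
    {y | (∀ j, y j ∈ Set.Ioi 0 → A i j = 1) ∧ (∀ j, y j ∈ Set.Iio 0 → A i j = -1) ∧
      (fun j ↦ (A i j : ℝ)) ⬝ᵥ y = 1} := by
  refine convexHull_min ?_ <| (convex_setOf_forall_mem_imp (by simpa using convex_Iic 0) _).inter <|
    (convex_setOf_forall_mem_imp (by simpa using convex_Ici 0) _).inter <|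
    convex_hyperplane ⟨dotProduct_add _, fun c y ↦ dotProduct_smul c _ y⟩ 1
  rintro _ (⟨j, hj, rfl⟩ | ⟨j, hj, rfl⟩) <;>
  · refine ⟨fun k hk ↦ ?_, fun k hk ↦ ?_, by simp [hj]⟩ <;>
    · rcases eq_or_ne k j with rfl | hkj <;> first | exact hj | norm_num [*] at hk

lemma ne_zero_of_mem_rowSimplex {i : Fin M} {x : Fin N → ℝ} (hx : x ∈ rowSimplex A i) :
    x ≠ 0 := by
  rintro rfl
  simpa using (rowSimplex_subset i hx).2.2

lemma isFace_topSigns {i : Fin M} {x : Fin N → ℝ} (hx : x ∈ rowSimplex A i) :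
    IsFace A (topSigns x) := by
  obtain ⟨hpos, hneg, -⟩ := rowSimplex_subset i hx
  refine ⟨?_, i, true, fun j hj ↦ hpos j ?_, fun j hj ↦ hneg j ?_⟩
  · obtain ⟨j, hj⟩ := supportFinset_topSigns_nonempty (ne_zero_of_mem_rowSimplex hx)
    exact fun h ↦ (Finset.mem_filter.1 hj).2 (congrFun h j)
  · have hj : topSigns x j = 1 := hj
    exact sign_eq_one_iff.1 (hj ▸ topSigns_eq_sign (by simp [hj])).symm
  · have hj : topSigns x j = -1 := neg_eq_iff_eq_neg.1 hj
    exact sign_eq_neg_one_iff.1 (hj ▸ topSigns_eq_sign (by simp [hj])).symm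

end SignMatrix

end SignComplex

open SignComplex

theorem index_le_two_height_general {M N : ℕ} (A : Fin M → Fin N → ℤ) (h : ℕ)
    (hheight : IsGreatest
      {k | ∃ c : Fin k → Set (Fin N), StrictMono c ∧ ∀ t, c t ∈ interFamily A}
      h) :
    ∃ f : (Fin N → ℝ) → (Fin (2 * h) → ℝ),
      ContinuousOn f (signComplexReal A) ∧
      (∀ x ∈ signComplexReal A, f x ≠ 0) ∧
      (∀ x, x ∈ signComplexReal A → -x ∈ signComplexReal A → f (-x) = -f x) := by
  have hdepth : depth (interFamily A) ∅ ≤ h := depth_le hheight.2 ∅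
  have hrow : ∀ i, ∀ x ∈ rowSimplex A i, labelMap (faceLabel A) (2 * h) x ≠ 0 := by
    intro i x hx
    have hface := isFace_topSigns hx
    refine labelMap_ne_zero (ne_zero_of_mem_rowSimplex hx) (faceLabel_ne_zero hface) ?_
      fun s hs ↦ faceLabel_ne_neg hface hs
    exact (natAbs_faceLabel_le hface).trans (by omega)
  refine ⟨labelMap (faceLabel A) (2 * h), (continuous_labelMap _ _).continuousOn, ?_,
    fun x _ _ ↦ labelMap_neg faceLabel_neg _ x⟩
  intro x hx
  obtain ⟨i, hx | hx⟩ := Set.mem_iUnion.1 hx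
  · exact hrow i x hx
  · rw [← neg_neg x, labelMap_neg faceLabel_neg, neg_ne_zero]
    exact hrow i (-x) hx

/-- Chain height bounds the ℤ₂-index: if `h` is the height of `A` (the maximum
length of a strictly increasing chain in `I(A)`), then there is a
ℤ₂-equivariant continuous map `|S(A)| → ℝ^{2h} \ {0}`, i.e.
`ind_{ℤ₂}(S(A)) ≤ 2·h(A) - 1`. -/
theorem index_le_two_height {M N : ℕ} (A : Fin M → Fin N → ℤ)
    (hA : ∀ i j, A i j = -1 ∨ A i j = 0 ∨ A i j = 1)
    (hne : ∃ i j, A i j ≠ 0) (h : ℕ)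
    (hheight : IsGreatest
      {k | ∃ c : Fin k → Set (Fin N), StrictMono c ∧ ∀ t, c t ∈ interFamily A}
      h) :
    ∃ f : (Fin N → ℝ) → (Fin (2 * h) → ℝ),
      ContinuousOn f (signComplexReal A) ∧
      (∀ x ∈ signComplexReal A, f x ≠ 0) ∧
      (∀ x, x ∈ signComplexReal A → -x ∈ signComplexReal A → f (-x) = -f x) :=
  index_le_two_height_general A h hheight
end

section
/- (Cells of large sign patterns are small in random matrices.) Fix ε > 0. There exists a constant C₁ = C₁(ε) > 0 such that, for A drawn uniformly at random from total sign matrices {−1,1}^{N×N}, the probability of the following event tends to 0 as N → ∞: there exist a set T ⊆ Fin N of rows with |T| ≥ (1+ε)·log₂ N and a sign assignment s : T → {−1,1} such that the cell C(T,s) := {j ∈ Fin N : ∀ i ∈ T, A i j = s i} has |C(T,s)| > C₁·log₂ N. -/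
/-!
If a cell with at least `(1+ε) log₂ N` rows has more than `C₁ log₂ N` columns, then for
`t = ⌈(1+ε) log₂ N⌉` and `m = ⌊C₁ log₂ N⌋` there are `t` rows, a column `j₀` and `m` further
columns agreeing with `j₀` on those rows. For fixed rows and columns this has probability
`2^(-t m)`, and there are at most `N^t · N^(m+1)` choices, so the event has probability at most
`2^(log₂ N · (t + m + 1) - t m)`. For `C₁ = 1 + 2/ε` the exponent is at most
`-(log₂ N)² + (1+ε) log₂ N`, which tends to `-∞`.
-/

open Finset MeasureTheory Filter Real Topology
open scoped ENNReal

theorem measure_biUnion_finset_le_card_mul {α ι : Type*} [MeasurableSpace α] (μ : Measure α)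
    (s : Finset ι) (E : ι → Set α) {c : ℝ≥0∞} (h : ∀ i ∈ s, μ (E i) ≤ c) :
    μ (⋃ i ∈ s, E i) ≤ #s * c :=
  (measure_biUnion_finset_le s E).trans <| (sum_le_card_nsmul s _ c h).trans_eq (nsmul_eq_mul ..)

section ColumnsAgree

variable {ι κ β : Type*}

def columnsAgree (T : Finset ι) (j₀ : κ) (S : Finset κ) : Set (ι → κ → β) :=
  {A | ∀ j ∈ S, ∀ i ∈ T, A i j = A i j₀}

/-- Overwriting the block `T × S` with copies of column `j₀` forgets exactly the entries of
that block. -/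
def columnsAgreeEquiv [DecidableEq ι] [DecidableEq κ] (T : Finset ι) {j₀ : κ} {S : Finset κ}
    (hj₀ : j₀ ∉ S) :
    columnsAgree (β := β) T j₀ S × (↥(T ×ˢ S) → β) ≃ (ι → κ → β) where
  toFun x i j := if h : (i, j) ∈ T ×ˢ S then x.2 ⟨(i, j), h⟩ else x.1.1 i j
  invFun A :=
    (⟨fun i j => if (i, j) ∈ T ×ˢ S then A i j₀ else A i j, fun j hj i hi => by
        simp [hi, hj, hj₀]⟩,
      fun p => A p.1.1 p.1.2)
  left_inv := by
    rintro ⟨⟨B, hB⟩, v⟩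
    refine Prod.ext (Subtype.ext ?_) ?_
    · funext i j
      by_cases h : (i, j) ∈ T ×ˢ S
      · rw [mem_product] at h
        simp [h, hj₀, hB j h.2 i h.1]
      · simp [h]
    · funext p
      simp [p.2]
  right_inv A := by
    funext i j
    by_cases h : (i, j) ∈ T ×ˢ S <;> simp [h]

theorem toMeasure_uniformOfFintype_columnsAgree [Fintype ι] [Fintype κ] [DecidableEq ι]
    [DecidableEq κ] [Fintype β] [Nonempty β] [MeasurableSpace β]
    [MeasurableSingletonClass β] (T : Finset ι) {j₀ : κ} {S : Finset κ} (hj₀ : j₀ ∉ S) :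
    (PMF.uniformOfFintype (ι → κ → β)).toMeasure (columnsAgree T j₀ S) =
      ((Fintype.card β : ℝ≥0∞) ^ (#T * #S))⁻¹ := by
  classical
  have hcard := Fintype.card_congr (columnsAgreeEquiv (β := β) T hj₀)
  rw [Fintype.card_prod, Fintype.card_fun, Fintype.card_coe, card_product] at hcard
  have hpos : (Fintype.card (columnsAgree (β := β) T j₀ S) : ℝ≥0∞) ≠ 0 := by
    have : Nonempty (columnsAgree (β := β) T j₀ S) :=
      ⟨⟨fun _ _ => Classical.arbitrary β, fun _ _ _ _ => rfl⟩⟩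
    simp
  rw [PMF.toMeasure_uniformOfFintype_apply _ (Set.toFinite _).measurableSet, ← hcard]
  push_cast
  rw [div_eq_mul_inv, ENNReal.mul_inv (.inl hpos) (.inl (by simp)), ← mul_assoc,
    ENNReal.mul_inv_cancel hpos (by simp), one_mul]

theorem exists_columnsAgree_of_le_card [Fintype ι] [Fintype κ] [DecidableEq κ]
    {A : ι → κ → β} {T₀ : Finset ι} {C : Finset κ} {s : ι → β} {t m : ℕ}
    (hC : ∀ j ∈ C, ∀ i ∈ T₀, A i j = s i) (ht : t ≤ #T₀) (hm : m < #C) :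
    ∃ T ∈ powersetCard t univ, ∃ j₀, ∃ S ∈ powersetCard m (univ.erase j₀),
      A ∈ columnsAgree T j₀ S := by
  obtain ⟨T, hTT₀, hT⟩ := exists_subset_card_eq ht
  obtain ⟨j₀, hj₀⟩ : C.Nonempty := card_pos.1 (by omega)
  obtain ⟨S, hS, hSm⟩ := exists_subset_card_eq (s := C.erase j₀) (n := m) (by
    rw [card_erase_of_mem hj₀]; omega)
  refine ⟨T, mem_powersetCard.2 ⟨subset_univ T, hT⟩, j₀, S,
    mem_powersetCard.2 ⟨hS.trans (erase_subset_erase j₀ (subset_univ C)), hSm⟩, ?_⟩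
  intro j hj i hi
  rw [hC j (mem_of_mem_erase (hS hj)) i (hTT₀ hi), hC j₀ hj₀ i (hTT₀ hi)]

theorem toMeasure_uniformOfFintype_exists_columnsAgree_le [Fintype ι] [Fintype κ]
    [DecidableEq ι] [DecidableEq κ] [Fintype β] [Nonempty β] [MeasurableSpace β]
    [MeasurableSingletonClass β] (t m : ℕ) :
    (PMF.uniformOfFintype (ι → κ → β)).toMeasure
        {A | ∃ T ∈ powersetCard t univ, ∃ j₀, ∃ S ∈ powersetCard m (univ.erase j₀),
          A ∈ columnsAgree T j₀ S} ≤
      (Fintype.card ι : ℝ≥0∞) ^ t * (Fintype.card κ : ℝ≥0∞) ^ (m + 1) *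
        ((Fintype.card β : ℝ≥0∞) ^ (t * m))⁻¹ := by
  set μ := (PMF.uniformOfFintype (ι → κ → β)).toMeasure
  set q : ℝ≥0∞ := ((Fintype.card β : ℝ≥0∞) ^ (t * m))⁻¹
  have hunion : {A : ι → κ → β | ∃ T ∈ powersetCard t univ, ∃ j₀,
      ∃ S ∈ powersetCard m (univ.erase j₀), A ∈ columnsAgree T j₀ S} =
      ⋃ T ∈ powersetCard t (univ : Finset ι), ⋃ j₀ ∈ (univ : Finset κ),
        ⋃ S ∈ powersetCard m (univ.erase j₀), columnsAgree T j₀ S := by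
    ext A
    simp only [Set.mem_ofPred_eq, Set.mem_iUnion, exists_prop, mem_univ, true_and]
  have hcolumns : ∀ T ∈ powersetCard t (univ : Finset ι), ∀ j₀ : κ,
      μ (⋃ S ∈ powersetCard m (univ.erase j₀), columnsAgree T j₀ S) ≤
        (Fintype.card κ : ℝ≥0∞) ^ m * q := by
    intro T hT j₀
    refine (measure_biUnion_finset_le_card_mul μ _ _ (c := q) fun S hS => ?_).trans ?_
    · rw [mem_powersetCard] at hT hS
      have hj₀ : j₀ ∉ S := fun h => by simpa using hS.1 h
      rw [toMeasure_uniformOfFintype_columnsAgree T hj₀, hT.2, hS.2]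
    · rw [card_powersetCard]
      gcongr
      exact_mod_cast (Nat.choose_le_pow _ _).trans
        (Nat.pow_le_pow_left (card_erase_le.trans_eq card_univ) m)
  calc μ _ ≤ #(powersetCard t (univ : Finset ι)) *
        (#(univ : Finset κ) * ((Fintype.card κ : ℝ≥0∞) ^ m * q)) := by
        rw [hunion]
        exact measure_biUnion_finset_le_card_mul μ _ _ fun T hT =>
          measure_biUnion_finset_le_card_mul μ _ _ fun j₀ _ => hcolumns T hT j₀
    _ ≤ (Fintype.card ι : ℝ≥0∞) ^ t *
          (Fintype.card κ * ((Fintype.card κ : ℝ≥0∞) ^ m * q)) := by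
        rw [card_powersetCard, card_univ, card_univ]
        gcongr
        exact_mod_cast Nat.choose_le_pow _ _
    _ = _ := by ring

end ColumnsAgree

theorem natCast_pow_mul_inv_two_pow_eq_rpow {N : ℕ} (hN : N ≠ 0) (k M : ℕ) :
    (N : ℝ≥0∞) ^ k * ((2 : ℝ≥0∞) ^ M)⁻¹ = 2 ^ (logb 2 N * k - M) := by
  have hN2 : (N : ℝ≥0∞) = 2 ^ logb 2 N := by
    rw [← ENNReal.ofReal_ofNat 2, ENNReal.ofReal_rpow_of_pos two_pos,
      Real.rpow_logb two_pos (by norm_num) (by positivity), ENNReal.ofReal_natCast]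
  rw [sub_eq_add_neg, ENNReal.rpow_add _ _ two_ne_zero ENNReal.ofNat_ne_top, ENNReal.rpow_mul,
    ← hN2, ENNReal.rpow_neg, ENNReal.rpow_natCast, ENNReal.rpow_natCast]

theorem tendsto_two_rpow_neg_sq_add_mul (c : ℝ) :
    Tendsto (fun x : ℝ => (2 : ℝ≥0∞) ^ (-x ^ 2 + c * x)) atTop (𝓝 0) := by
  have hpoly : Tendsto (fun x : ℝ => -x ^ 2 + c * x) atTop atBot := by
    refine tendsto_atBot_mono' atTop ?_ tendsto_neg_atTop_atBot
    filter_upwards [eventually_ge_atTop (|c| + 1)] with x hx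
    nlinarith [le_abs_self c, abs_nonneg c]
  exact (ENNReal.tendsto_rpow_atBot_of_one_lt_base (by norm_num)).comp hpoly

theorem union_bound_exponent_le {ε L t m : ℝ} (hε : 0 < ε) (hL : ε ≤ 2 * L)
    (ht : (1 + ε) * L ≤ t) (hm : (1 + 2 / ε) * L - 1 ≤ m) :
    L * (t + (m + 1)) - t * m ≤ -L ^ 2 + (1 + ε) * L := by
  have hεm : (ε + 2) * L - ε ≤ ε * m := by
    have h2 : ε * (2 / ε) = 2 := by field_simp
    nlinarith [mul_le_mul_of_nonneg_left hm hε.le]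
  have hLm : L ≤ m := by nlinarith
  nlinarith [mul_nonpos_of_nonneg_of_nonpos (sub_nonneg.2 ht) (sub_nonpos.2 hLm),
    mul_le_mul_of_nonneg_left hεm (by linarith : 0 ≤ L)]

/-- Cells of large sign patterns are small in random matrices: for every
`ε > 0` there is a constant `C₁ > 0` such that for a uniformly random total
sign matrix `A ∈ {-1,1}^{N×N}` (encoded by independent uniform Boolean
entries), the probability that some set `T` of rows with
`|T| ≥ (1+ε)·log₂ N` and some sign assignment `s` on `T` have a cell
`C(T,s) = {j : ∀ i ∈ T, A i j = s i}` of size exceeding `C₁·log₂ N`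
tends to `0` as `N → ∞`. -/
theorem random_matrix_cells_small (ε : ℝ) (hε : 0 < ε) : ∃ C₁ : ℝ, 0 < C₁ ∧
    Filter.Tendsto (fun N : ℕ =>
      (PMF.uniformOfFintype (Fin N → Fin N → Bool)).toMeasure
        {A | ∃ (T : Finset (Fin N)) (s : Fin N → Bool),
          (1 + ε) * Real.logb 2 N ≤ (T.card : ℝ) ∧
          C₁ * Real.logb 2 N <
            ((Finset.univ.filter fun j => ∀ i ∈ T, A i j = s i).card : ℝ)})
      Filter.atTop (nhds 0) := by
  refine ⟨1 + 2 / ε, by positivity, ?_⟩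
  have hlog : Tendsto (fun N : ℕ => logb 2 N) atTop atTop :=
    (tendsto_logb_atTop one_lt_two).comp tendsto_natCast_atTop_atTop
  refine tendsto_of_tendsto_of_tendsto_of_le_of_le' tendsto_const_nhds
    ((tendsto_two_rpow_neg_sq_add_mul (1 + ε)).comp hlog) (.of_forall fun _ => zero_le) ?_
  filter_upwards [eventually_ne_atTop 0, hlog.eventually_ge_atTop (ε / 2)] with N hN hL
  set L := logb 2 N
  set t := ⌈(1 + ε) * L⌉₊
  set m := ⌊(1 + 2 / ε) * L⌋₊
  have hL0 : 0 ≤ L := (half_pos hε).le.trans hL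
  calc _ ≤ (PMF.uniformOfFintype (Fin N → Fin N → Bool)).toMeasure
        {A | ∃ T ∈ powersetCard t univ, ∃ j₀, ∃ S ∈ powersetCard m (univ.erase j₀),
          A ∈ columnsAgree T j₀ S} := by
        refine measure_mono ?_
        rintro A ⟨T₀, s, hT₀, hcell⟩
        exact exists_columnsAgree_of_le_card (fun j hj => (mem_filter.1 hj).2)
          (Nat.ceil_le.2 hT₀) ((Nat.floor_lt (mul_nonneg (by positivity) hL0)).2 hcell)
    _ ≤ (N : ℝ≥0∞) ^ t * (N : ℝ≥0∞) ^ (m + 1) * ((2 : ℝ≥0∞) ^ (t * m))⁻¹ := by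
        simpa using toMeasure_uniformOfFintype_exists_columnsAgree_le (ι := Fin N)
          (κ := Fin N) (β := Bool) t m
    _ = 2 ^ (L * ↑(t + (m + 1)) - ↑(t * m)) := by
        rw [← pow_add, natCast_pow_mul_inv_two_pow_eq_rpow hN]
    _ ≤ 2 ^ (-L ^ 2 + (1 + ε) * L) := by
        gcongr
        · norm_num
        push_cast
        exact union_bound_exponent_le hε (by linarith) (Nat.le_ceil _)
          (by linarith [Nat.lt_floor_add_one ((1 + 2 / ε) * L)])
end

section
/- (Height of the Hadamard matrix.) Let n ∈ ℕ and let H be the 2^n × 2^n Hadamard matrix indexed by 𝔽₂ⁿ, with H x y = (−1)^{⟨x,y⟩}. Then h(H) = n + 1: the maximum length of a strictly increasing chain of nonempty sets, each an intersection of finitely many members of {R_x^+, R_x^− : x ∈ 𝔽₂ⁿ} where R_x^+ := {y : ⟨x,y⟩ = 0} and R_x^− := {y : ⟨x,y⟩ = 1}, is exactly n + 1. -/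
/-- The intersection family `I(H)` of the `2^n × 2^n` Hadamard matrix
`H x y = (-1)^{⟨x,y⟩}`: all nonempty subsets of `𝔽₂ⁿ` expressible as an
intersection of finitely many (at least one) of the sets
`R_x^+ = {y : ⟨x,y⟩ = 0}` and `R_x^- = {y : ⟨x,y⟩ = 1}`. -/
def hadamardInterFamily (n : ℕ) : Set (Set (Fin n → ZMod 2)) :=
  {S | S.Nonempty ∧ ∃ F : Finset ((Fin n → ZMod 2) × Bool), F.Nonempty ∧
    S = ⋂ p ∈ F, {y | (∑ i, p.1 i * y i) = if p.2 then 0 else 1}}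

/-- The linear functional `y ↦ ⟨x, y⟩`. -/
def hadPhi (n : ℕ) (x : Fin n → ZMod 2) : (Fin n → ZMod 2) →ₗ[ZMod 2] ZMod 2 where
  toFun y := ∑ i, x i * y i
  map_add' := by intro a b; simp [mul_add, Finset.sum_add_distrib]
  map_smul' := by intro c a; simp [Finset.mul_sum, mul_left_comm]

lemma strictMono_fin_nat_le {k : ℕ} (g : Fin k → ℕ) (hg : StrictMono g) :
    ∀ m (hm : m < k), m ≤ g ⟨m, hm⟩ := by
  intro m
  induction m with
  | zero => intro _; exact Nat.zero_le _
  | succ m ih =>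
    intro hm
    have h1 : g ⟨m, by omega⟩ < g ⟨m+1, hm⟩ := hg (by simp [Fin.lt_def])
    have := ih (by omega)
    omega

/-- Height of the Hadamard matrix: `h(H) = n + 1`, i.e. `n + 1` is the maximum
length of a strictly increasing chain in `I(H)`. -/
theorem hadamard_height (n : ℕ) :
    IsGreatest
      {k | ∃ c : Fin k → Set (Fin n → ZMod 2),
        StrictMono c ∧ ∀ t, c t ∈ hadamardInterFamily n}
      (n + 1) := by
  constructor
  · -- membership: explicit chain
    refine ⟨fun t => {y | ∀ i : Fin n, (t : ℕ) ≤ (i : ℕ) → y i = 0}, ?_, ?_⟩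
    · intro s t hst
      have hsub : {y : Fin n → ZMod 2 | ∀ i : Fin n, (s : ℕ) ≤ (i : ℕ) → y i = 0} ⊆
          {y | ∀ i : Fin n, (t : ℕ) ≤ (i : ℕ) → y i = 0} := by
        intro y hy i hi
        exact hy i (le_trans (le_of_lt hst) hi)
      have hslt : (s : ℕ) < n := lt_of_lt_of_le hst (Nat.lt_succ_iff.mp t.isLt)
      refine lt_of_le_of_ne hsub ?_
      intro heq
      have hmem : (Pi.single (⟨s, hslt⟩ : Fin n) (1 : ZMod 2)) ∈
          {y : Fin n → ZMod 2 | ∀ i : Fin n, (t : ℕ) ≤ (i : ℕ) → y i = 0} := by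
        intro i hi
        have : (⟨s, hslt⟩ : Fin n) ≠ i := by
          intro h; apply absurd hi; rw [← h]; simp; omega
        simp [Pi.single_apply, Ne.symm this]
      have hmem2 : (Pi.single (⟨s, hslt⟩ : Fin n) (1 : ZMod 2)) ∈
          {y : Fin n → ZMod 2 | ∀ i : Fin n, (s : ℕ) ≤ (i : ℕ) → y i = 0} :=
        (Set.ext_iff.mp heq _).mpr hmem
      have := hmem2 ⟨s, hslt⟩ (le_refl _)
      simp at this
    · intro t
      refine ⟨⟨0, by intro i _; rfl⟩,
        insert ((0 : Fin n → ZMod 2), true)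
          ((Finset.univ.filter fun i : Fin n => (t : ℕ) ≤ (i : ℕ)).image
            fun i => (Pi.single i (1 : ZMod 2), true)), ⟨_, Finset.mem_insert_self _ _⟩, ?_⟩
      ext y
      simp only [Set.mem_setOf_eq, Set.mem_iInter, Finset.mem_insert, Finset.mem_image,
        Finset.mem_filter, Finset.mem_univ, true_and]
      constructor
      · rintro h p (hp | ⟨i, hi, rfl⟩)
        · subst hp; simp
        · simpa [Pi.single_apply] using h i hi
      · intro h i hi
        have := h (Pi.single i (1 : ZMod 2), true) (Or.inr ⟨i, hi, rfl⟩)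
        simpa [Pi.single_apply] using this
  · -- upper bound
    rintro k ⟨c, hc, hmem⟩
    rcases Nat.eq_zero_or_pos k with hk | hk
    · omega
    have hne : ∀ t, (c t).Nonempty := fun t => (hmem t).1
    choose F hFne hFeq using fun t => (hmem t).2
    obtain ⟨y₀, hy₀⟩ := hne ⟨0, hk⟩
    have hy₀t : ∀ t, y₀ ∈ c t := fun t =>
      hc.monotone (show (⟨0, hk⟩ : Fin k) ≤ t from Fin.mk_le_of_le_val (Nat.zero_le _)) hy₀
    set W : Fin k → Submodule (ZMod 2) (Fin n → ZMod 2) :=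
      fun t => ⨅ p ∈ F t, LinearMap.ker (hadPhi n p.1) with hW
    -- membership characterization
    have key : ∀ t y, y ∈ c t ↔ y - y₀ ∈ W t := by
      intro t y
      have hy₀' := hy₀t t
      rw [hFeq t] at hy₀' ⊢
      simp only [Set.mem_iInter, Set.mem_setOf_eq] at hy₀' ⊢
      rw [hW]
      simp only [Submodule.mem_iInf, LinearMap.mem_ker, map_sub]
      have hval : ∀ x z, hadPhi n x z = ∑ i, x i * z i := fun _ _ => rfl
      constructor
      · intro h p hp
        rw [hval, hval, h p hp, hy₀' p hp, sub_self]
      · intro h p hp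
        have h2 := h p hp
        rw [hval, hval, sub_eq_zero] at h2
        rw [h2, hy₀' p hp]
    have hWmono : StrictMono W := by
      intro s t hst
      have hsub : W s ≤ W t := by
        intro v hv
        have : y₀ + v ∈ c s := by rw [key]; simpa using hv
        have : y₀ + v ∈ c t := (hc hst).le this
        rw [key] at this; simpa using this
      refine lt_of_le_of_ne hsub ?_
      intro heq
      have : c s = c t := by
        ext y; rw [key, key, heq]
      exact absurd this (hc hst).ne
    have hrank : StrictMono fun t => Module.finrank (ZMod 2) (W t) := by
      intro s t hst
      exact Submodule.finrank_lt_finrank_of_lt (hWmono hst)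
    have hlast : k - 1 ≤ Module.finrank (ZMod 2) (W ⟨k - 1, by omega⟩) :=
      strictMono_fin_nat_le _ hrank (k - 1) (by omega)
    have hle : Module.finrank (ZMod 2) (W ⟨k - 1, by omega⟩) ≤
        Module.finrank (ZMod 2) (Fin n → ZMod 2) := Submodule.finrank_le _
    have htot : Module.finrank (ZMod 2) (Fin n → ZMod 2) = n := by
      simp [Module.finrank_pi]
    omega
end

section
/- (Upper bound on the ℤ₂-index of the Hadamard sign complex.) Let n ∈ ℕ and let H be the 2^n × 2^n Hadamard matrix indexed by 𝔽₂ⁿ, with H x y = (−1)^{⟨x,y⟩}. Then there exists a continuous map f : |S(H)| → ℝ^(2n+2) such that f(v) ≠ 0 for all v ∈ |S(H)| and f(−v) = −f(v) for all v ∈ |S(H)|; i.e., ind_{ℤ₂}(S(H)) ≤ 2n + 1 = 2·log₂(2^n) + 1, while srank(H) ≥ 2^{n/2} by Forster's theorem. -/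
open scoped Pointwise

/-- The realized simplex `σ_x` of the sign complex of the `2^n × 2^n` Hadamard
matrix `H x y = (-1)^{⟨x,y⟩}`: the convex hull of
`{e_y : ⟨x,y⟩ = 0} ∪ {-e_y : ⟨x,y⟩ = 1}`. -/
noncomputable def hadamardSimplex (n : ℕ) (x : Fin n → ZMod 2) :
    Set ((Fin n → ZMod 2) → ℝ) :=
  convexHull ℝ
    ({v | ∃ y, (∑ i, x i * y i) = 0 ∧ v = Pi.single y (1 : ℝ)} ∪
     {v | ∃ y, (∑ i, x i * y i) = 1 ∧ v = -Pi.single y (1 : ℝ)})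

/-- The crosspolytope realization `|S(H)|` of the Hadamard sign complex. -/
noncomputable def hadamardReal (n : ℕ) : Set ((Fin n → ZMod 2) → ℝ) :=
  ⋃ x, (hadamardSimplex n x ∪ -(hadamardSimplex n x))

/-!
Write a point of `σ_x` as `v = χ_x * w` with `χ_x y = (-1)^⟨x,y⟩` and `w` in the standard
simplex. As `χ_x` is a character, the `N`-fold convolution power of `v` is `χ_x` times that of
`w`; for odd `N` it is odd in `v`, and its support is the set of sums of `N`-tuples from
`supp w`. In `𝔽₂ⁿ`, once `N > 2ⁿ` that set is the coset `s₀ + span (supp w + s₀)`, so it has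
`2^k` elements with `k ≤ n`. The `k`-th coordinate of the map applies to the convolution power
an odd continuous function that is nonzero at every `u` with exactly `2^k` nonzero entries:
for such `u` only the term `A = supp u` of `∑_{|A| = 2^k} (∏_{z ∈ A} |u z|) * u (a_A)` survives.
-/

open Finset

section SupportDetector

variable {ι : Type*} [Fintype ι] [Nonempty ι]

noncomputable def supportDetector (m : ℕ) (u : ι → ℝ) : ℝ :=
  ∑ A ∈ powersetCard m univ, (∏ z ∈ A, |u z|) * u (Classical.epsilon (· ∈ A))

theorem continuous_supportDetector (m : ℕ) : Continuous (supportDetector (ι := ι) m) := by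
  unfold supportDetector; fun_prop

theorem supportDetector_neg (m : ℕ) (u : ι → ℝ) :
    supportDetector m (-u) = -supportDetector m u := by
  simp [supportDetector]

theorem supportDetector_ne_zero {m : ℕ} (hm : 0 < m) {u : ι → ℝ} (hu : #{z | u z ≠ 0} = m) :
    supportDetector m u ≠ 0 := by
  set A₀ : Finset ι := {z | u z ≠ 0}
  have hA₀ : A₀ ∈ powersetCard m univ := mem_powersetCard.2 ⟨subset_univ _, hu⟩
  rw [supportDetector, sum_eq_single_of_mem A₀ hA₀]
  · have hprod : ∏ z ∈ A₀, |u z| ≠ 0 :=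
      prod_ne_zero_iff.2 fun z hz => abs_ne_zero.2 (mem_filter.1 hz).2
    have hpick : Classical.epsilon (· ∈ A₀) ∈ A₀ :=
      Classical.epsilon_spec (card_pos.1 (hu ▸ hm))
    exact mul_ne_zero hprod (mem_filter.1 hpick).2
  · intro A hA hne
    obtain ⟨z, hzA, hzA₀⟩ := not_subset.1 fun h =>
      hne (eq_of_subset_of_card_le h (by rw [hu, (mem_powersetCard.1 hA).2]))
    have hz : u z = 0 := by simpa [A₀] using hzA₀
    rw [prod_eq_zero hzA (by simp [hz]), zero_mul]

end SupportDetector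

theorem AddChar.map_sum_eq_prod {A M ι : Type*} [AddCommMonoid A] [CommMonoid M]
    (ψ : AddChar A M) (s : Finset ι) (f : ι → A) : ψ (∑ i ∈ s, f i) = ∏ i ∈ s, ψ (f i) := by
  simpa [← ofAdd_sum] using map_prod ψ.toMonoidHom (fun i => Multiplicative.ofAdd (f i)) s

section ConvolutionPower

variable {V : Type*} [AddCommMonoid V] [Fintype V] [DecidableEq V]

noncomputable def convPow (N : ℕ) (v : V → ℝ) (z : V) : ℝ :=
  ∑ t : Fin N → V with ∑ i, t i = z, ∏ i, v (t i)

theorem continuous_convPow (N : ℕ) : Continuous (convPow (V := V) N) := by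
  unfold convPow; fun_prop

theorem convPow_neg {N : ℕ} (hN : Odd N) (v : V → ℝ) : convPow N (-v) = -convPow N v := by
  ext z
  simp [convPow, prod_neg, hN.neg_one_pow]

theorem convPow_addChar_mul (χ : AddChar V ℝ) (N : ℕ) (v : V → ℝ) (z : V) :
    convPow N (⇑χ * v) z = χ z * convPow N v z := by
  rw [convPow, convPow, mul_sum]
  refine sum_congr rfl fun t ht => ?_
  rw [Pi.mul_def]
  simp only [prod_mul_distrib, ← χ.map_sum_eq_prod, (mem_filter.1 ht).2]

theorem convPow_ne_zero_iff {v : V → ℝ} (hv : ∀ y, 0 ≤ v y) {N : ℕ} {z : V} :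
    convPow N v z ≠ 0 ↔ ∃ t : Fin N → V, (∀ i, 0 < v (t i)) ∧ ∑ i, t i = z := by
  rw [Ne, convPow, sum_eq_zero_iff_of_nonneg fun t _ => prod_nonneg fun i _ => hv _]
  simp [prod_ne_zero_iff, fun y => (hv y).lt_iff_ne', and_comm]

end ConvolutionPower

theorem ZMod.eq_zero_or_eq_one (r : ZMod 2) : r = 0 ∨ r = 1 := by
  revert r; decide

section CharTwo

variable {V : Type*} [AddCommGroup V] [Module (ZMod 2) V]

theorem ZModModule.odd_nsmul_eq_self {N : ℕ} (hN : Odd N) (a : V) : N • a = a := by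
  obtain ⟨k, rfl⟩ := hN
  simp [add_nsmul, mul_nsmul', two_nsmul, ZModModule.add_self]

variable [DecidableEq V]

theorem exists_tuple_sum_eq_sum_add_nsmul {S F : Finset V} {s₀ : V} (hs₀ : s₀ ∈ S)
    (hF : F ⊆ S.image (· + s₀)) {m : ℕ} (hm : #F ≤ m) :
    ∃ t : Fin m → V, (∀ i, t i ∈ S) ∧ ∑ i, t i = ∑ b ∈ F, b + m • s₀ := by
  induction F using Finset.induction_on generalizing m with
  | empty => exact ⟨fun _ => s₀, fun _ => hs₀, by simp⟩
  | insert a F haF ih =>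
    rw [card_insert_of_notMem haF] at hm
    obtain ⟨m, rfl⟩ : ∃ m', m = m' + 1 := ⟨m - 1, by omega⟩
    obtain ⟨t, htS, hsum⟩ := ih ((subset_insert a F).trans hF) (m := m) (by omega)
    obtain ⟨s, hs, rfl⟩ := mem_image.1 (hF (mem_insert_self a F))
    refine ⟨Fin.cons s t, Fin.cases hs htS, ?_⟩
    rw [Fin.sum_cons]
    calc s + ∑ i, t i = s + (∑ b ∈ F, b + m • s₀) + (s₀ + s₀) := by
          rw [hsum, ZModModule.add_self, add_zero]
      _ = ∑ b ∈ insert (s + s₀) F, b + (m + 1) • s₀ := by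
          rw [sum_insert haF, succ_nsmul']; abel

theorem exists_tuple_sum_iff_mem_span {S : Finset V} {s₀ : V} (hs₀ : s₀ ∈ S) {N : ℕ}
    (hN : Odd N) (hSN : #S < N) (z : V) :
    (∃ t : Fin N → V, (∀ i, t i ∈ S) ∧ ∑ i, t i = z) ↔
      z + s₀ ∈ Submodule.span (ZMod 2) (S.image (· + s₀) : Set V) := by
  constructor
  · rintro ⟨t, htS, rfl⟩
    have hshift : ∑ i, t i + s₀ = ∑ i, (t i + s₀) := by
      rw [sum_add_distrib, sum_const, card_univ, Fintype.card_fin,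
        ZModModule.odd_nsmul_eq_self hN]
    rw [hshift]
    exact Submodule.sum_mem _ fun i _ => Submodule.subset_span (mem_image_of_mem _ (htS i))
  · intro hz
    obtain ⟨c, -, hc⟩ := Submodule.mem_span_finset.1 hz
    set F := (S.image (· + s₀)).filter (c · = 1)
    have hF : ∑ b ∈ F, b = z + s₀ := by
      rw [← hc, sum_filter]
      refine sum_congr rfl fun b _ => ?_
      rcases ZMod.eq_zero_or_eq_one (c b) with h | h <;> simp [h]
    have hFN : #F ≤ N := ((card_filter_le _ _).trans card_image_le).trans hSN.le
    obtain ⟨t, htS, hsum⟩ := exists_tuple_sum_eq_sum_add_nsmul hs₀ (filter_subset _ _) hFN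
    refine ⟨t, htS, ?_⟩
    rw [hsum, hF, ZModModule.odd_nsmul_eq_self hN, add_assoc, ZModModule.add_self, add_zero]

end CharTwo

theorem exists_card_support_convPow_eq_two_pow {V : Type*} [AddCommGroup V] [Module (ZMod 2) V]
    [Fintype V] [DecidableEq V] (χ : AddChar V ℝ) {w : V → ℝ} (hw₀ : ∀ y, 0 ≤ w y) (hw : w ≠ 0)
    {N : ℕ} (hN : Odd N) (hVN : Fintype.card V < N) :
    ∃ k ≤ Module.finrank (ZMod 2) V, #{z | convPow N (⇑χ * w) z ≠ 0} = 2 ^ k := by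
  classical
  obtain ⟨s₀, hs₀⟩ : ∃ s₀, 0 < w s₀ := by
    obtain ⟨s₀, h⟩ := Function.ne_iff.1 hw
    exact ⟨s₀, (hw₀ s₀).lt_of_ne' h⟩
  set S : Finset V := {y | 0 < w y}
  set U := Submodule.span (ZMod 2) (S.image (· + s₀) : Set V)
  have hχ : ∀ z, χ z ≠ 0 := fun z h => by simpa [h] using χ.map_add_eq_mul z (-z)
  have hsupp : ∀ z, convPow N (⇑χ * w) z ≠ 0 ↔ z + s₀ ∈ U := fun z => by
    rw [convPow_addChar_mul, mul_ne_zero_iff, and_iff_right (hχ z), convPow_ne_zero_iff hw₀,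
      ← exists_tuple_sum_iff_mem_span (show s₀ ∈ S by simp [S, hs₀]) hN
        ((card_le_univ S).trans_lt hVN)]
    simp [S]
  refine ⟨Module.finrank (ZMod 2) U, Submodule.finrank_le U, ?_⟩
  calc #{z | convPow N (⇑χ * w) z ≠ 0} = #{z | z ∈ U} :=
        card_equiv (Equiv.addRight s₀) fun z => by simp [hsupp]
    _ = 2 ^ Module.finrank (ZMod 2) U := by
        rw [← Fintype.card_subtype, Module.card_eq_pow_finrank (K := ZMod 2), ZMod.card]

noncomputable def hadamardChar {n : ℕ} (x : Fin n → ZMod 2) : AddChar (Fin n → ZMod 2) ℝ where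
  toFun y := (-1) ^ (∑ i, x i * y i).val
  map_zero_eq_one' := by simp
  map_add_eq_mul' a b := by
    simp only [Pi.add_apply, mul_add, sum_add_distrib, ZMod.val_add, ← neg_one_pow_eq_pow_mod_two,
      pow_add]

theorem hadamardSimplex_eq_image {n : ℕ} (x : Fin n → ZMod 2) :
    hadamardSimplex n x = (⇑(hadamardChar x) * ·) '' stdSimplex ℝ (Fin n → ZMod 2) := by
  rw [← convexHull_basis_eq_stdSimplex,
    show (⇑(hadamardChar x) * ·) = ⇑(LinearMap.mulLeft ℝ ⇑(hadamardChar x)) from rfl,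
    LinearMap.image_convexHull, ← Set.range_comp, hadamardSimplex]
  congr 1
  have hbasis : ∀ y, (⇑(hadamardChar x) * fun j => if y = j then (1 : ℝ) else 0) =
      if ∑ i, x i * y i = 0 then Pi.single y 1 else -Pi.single y 1 := fun y => by
    ext j
    rcases eq_or_ne y j with rfl | hyj
    · rcases ZMod.eq_zero_or_eq_one (∑ i, x i * y i) with h | h <;>
        simp [hadamardChar, h, show ZMod.val (1 : ZMod 2) = 1 from rfl]
    · split_ifs <;> simp [hyj]
  ext v
  simp only [Set.mem_union, Set.mem_ofPred_eq, Set.mem_range, Function.comp_apply,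
    LinearMap.mulLeft_apply, hbasis]
  constructor
  · rintro (⟨y, hy, rfl⟩ | ⟨y, hy, rfl⟩) <;> exact ⟨y, by simp [hy]⟩
  · rintro ⟨y, rfl⟩
    rcases ZMod.eq_zero_or_eq_one (∑ i, x i * y i) with h | h
    · exact .inl ⟨y, h, by simp [h]⟩
    · exact .inr ⟨y, h, by simp [h]⟩

/-- Upper bound on the ℤ₂-index of the Hadamard sign complex: there is a
ℤ₂-equivariant continuous map `|S(H)| → ℝ^{2n+2} \ {0}`, i.e.
`ind_{ℤ₂}(S(H)) ≤ 2n + 1`. -/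
theorem hadamard_index_upper (n : ℕ) :
    ∃ f : ((Fin n → ZMod 2) → ℝ) → (Fin (2 * n + 2) → ℝ),
      ContinuousOn f (hadamardReal n) ∧
      (∀ v ∈ hadamardReal n, f v ≠ 0) ∧
      (∀ v ∈ hadamardReal n, f (-v) = -f v) := by
  set N := 2 * Fintype.card (Fin n → ZMod 2) + 1
  have hN : Odd N := odd_two_mul_add_one _
  set f := fun (v : (Fin n → ZMod 2) → ℝ) (j : Fin (2 * n + 2)) =>
    supportDetector (2 ^ (j : ℕ)) (convPow N v)
  have hf_neg : ∀ v, f (-v) = -f v := fun v => by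
    ext j
    simp only [f, convPow_neg hN, supportDetector_neg, Pi.neg_apply]
  have hf_simplex : ∀ x, ∀ v ∈ hadamardSimplex n x, f v ≠ 0 := by
    intro x v hv
    rw [hadamardSimplex_eq_image] at hv
    obtain ⟨w, ⟨hw₀, hw₁⟩, rfl⟩ := hv
    obtain ⟨k, hk, hcard⟩ := exists_card_support_convPow_eq_two_pow (hadamardChar x) hw₀
      (by rintro rfl; simp at hw₁) hN (by omega)
    rw [Module.finrank_fin_fun] at hk
    exact fun h => supportDetector_ne_zero (pow_pos two_pos k) hcard (congrFun h ⟨k, by omega⟩)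
  refine ⟨f, (continuous_pi fun j => (continuous_supportDetector _).comp
    (continuous_convPow _)).continuousOn, fun v hv => ?_, fun v _ => hf_neg v⟩
  obtain ⟨x, hx | hx⟩ := Set.mem_iUnion.1 hv
  · exact hf_simplex x v hx
  · rw [← neg_neg v, hf_neg, neg_ne_zero]
    exact hf_simplex x (-v) hx
end

section
/- (Small pairwise facet intersections force ℤ₂-index at most 1.) Let A : Fin M → Fin N → ℤ be a partial sign matrix such that for all distinct rows i ≠ i' and each ε ∈ {1, −1}, the set {j : A i j ≠ 0 ∧ A i' j ≠ 0 ∧ A i j = ε · A i' j} has at most one element (equivalently, every pair of facets of the sign complex S(A) intersects in at most one vertex). Then there exists a continuous map f : |S(A)| → ℝ² such that f(x) ≠ 0 for all x ∈ |S(A)| and f(−x) = −f(x) whenever x and −x both lie in |S(A)|; i.e., ind_{ℤ₂}(S(A)) ≤ 1. -/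
open scoped Pointwise

/-!
Let `P` be the union of the row simplices `σ_i`, so that `|S(A)| = P ∪ -P`. The map
`x ↦ (∑ j, x j, d(x, -P) - d(x, P))` is continuous and odd, and since `P` is closed its second
coordinate vanishes on `P ∪ -P` only on `P ∩ -P`. If `x ∈ σ_i` and `-x ∈ σ_i'`, then every
column `j` with `x j ≠ 0` carries opposite nonzero entries in rows `i` and `i'` (so `i ≠ i'`);
by hypothesis there is at most one such column, hence `∑ j, x j ≠ 0`.
-/

open Metric

section InfDist

variable {E : Type*} [NormedAddCommGroup E]

lemma Metric.infDist_neg (x : E) (P : Set E) : infDist (-x) P = infDist x (-P) := by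
  simpa [Set.image_neg_eq_neg] using infDist_image (x := x) (t := -P) isometry_neg

lemma Metric.mem_inter_neg_of_infDist_eq {P : Set E} {x : E} (hP : IsClosed P) (hx : x ∈ P ∪ -P)
    (h : infDist x (-P) = infDist x P) : x ∈ P ∩ -P := by
  rcases hx with hx | hx
  · refine ⟨hx, (hP.neg.mem_iff_infDist_zero ⟨-x, by simpa using hx⟩).2 ?_⟩
    rw [h, infDist_zero_of_mem hx]
  · refine ⟨(hP.mem_iff_infDist_zero ⟨-x, hx⟩).2 ?_, hx⟩
    rw [← h, infDist_zero_of_mem hx]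

end InfDist

section RowSimplex

variable {M N : ℕ} (A : Fin M → Fin N → ℤ) (i : Fin M)

lemma isClosed_rowSimplex : IsClosed (rowSimplex A i) := by
  refine Set.Finite.isClosed_convexHull ℝ (Set.Finite.union ?_ ?_)
  · exact (Set.finite_range fun j => Pi.single j (1 : ℝ)).subset
      (by rintro _ ⟨j, -, rfl⟩; exact ⟨j, rfl⟩)
  · exact (Set.finite_range fun j => -Pi.single j (1 : ℝ)).subset
      (by rintro _ ⟨j, -, rfl⟩; exact ⟨j, rfl⟩)

lemma rowSimplex_subset_pi :
    rowSimplex A i ⊆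
      Set.univ.pi fun j => {t : ℝ | (0 < t → A i j = 1) ∧ (t < 0 → A i j = -1)} := by
  refine convexHull_min ?_ (convex_pi fun j _ => Set.OrdConnected.convex ⟨?_⟩)
  · rintro _ (⟨j, hj, rfl⟩ | ⟨j, hj, rfl⟩) k -
    all_goals
      rcases eq_or_ne k j with rfl | hk
      · simp [hj]
      · simp [Pi.single_eq_of_ne hk]
  · intro a ⟨ha₁, ha₂⟩ b ⟨hb₁, hb₂⟩ t ⟨hat, htb⟩
    exact ⟨fun ht => hb₁ (ht.trans_le htb), fun ht => ha₂ (hat.trans_lt ht)⟩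

lemma rowSimplex_subset_hyperplane :
    rowSimplex A i ⊆ {y | ∑ j, (A i j : ℝ) * y j = 1} := by
  refine convexHull_min ?_ (convex_hyperplane ?_ 1)
  · rintro _ (⟨j, hj, rfl⟩ | ⟨j, hj, rfl⟩) <;> simp [Pi.single_apply, hj]
  · constructor
    · intro y z; simp [mul_add, Finset.sum_add_distrib]
    · intro c y; simp [Finset.mul_sum, mul_left_comm]

end RowSimplex

variable {M N : ℕ} {A : Fin M → Fin N → ℤ} {i i' : Fin M} {x : Fin N → ℝ}

lemma entries_opposite_of_mem_rowSimplex_of_neg_mem (hx : x ∈ rowSimplex A i)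
    (hx' : -x ∈ rowSimplex A i') {j : Fin N} (hj : x j ≠ 0) :
    A i j ≠ 0 ∧ A i' j ≠ 0 ∧ A i j = -1 * A i' j := by
  obtain ⟨hpos, hneg⟩ := rowSimplex_subset_pi A i hx j trivial
  obtain ⟨hpos', hneg'⟩ := rowSimplex_subset_pi A i' hx' j trivial
  rcases hj.lt_or_gt with h | h
  · rw [hneg h, hpos' (by simpa using h)]; decide
  · rw [hpos h, hneg' (by simpa using h)]; decide

lemma sum_ne_zero_of_mem_rowSimplex_of_neg_mem
    (hfacet : ∀ i i' : Fin M, i ≠ i' → ∀ ε : ℤ, ε = 1 ∨ ε = -1 →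
      {j | A i j ≠ 0 ∧ A i' j ≠ 0 ∧ A i j = ε * A i' j}.Subsingleton)
    (hx : x ∈ rowSimplex A i) (hx' : -x ∈ rowSimplex A i') : ∑ j, x j ≠ 0 := by
  have hsum := rowSimplex_subset_hyperplane A i hx
  obtain ⟨j₀, -, hj₀⟩ := Finset.exists_ne_zero_of_sum_ne_zero (hsum ▸ one_ne_zero)
  have hxj₀ : x j₀ ≠ 0 := right_ne_zero_of_mul hj₀
  have hopp₀ := entries_opposite_of_mem_rowSimplex_of_neg_mem hx hx' hxj₀
  have hii' : i ≠ i' := by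
    rintro rfl
    omega
  have hsupp : ∀ j, x j ≠ 0 → j = j₀ := fun j hj =>
    hfacet i i' hii' (-1) (Or.inr rfl)
      (entries_opposite_of_mem_rowSimplex_of_neg_mem hx hx' hj) hopp₀
  rwa [Finset.sum_eq_single j₀ (fun j _ hj => not_not.1 (mt (hsupp j) hj)) (by simp)]

theorem facet_intersection_index_le_one_general {M N : ℕ} (A : Fin M → Fin N → ℤ)
    (hfacet : ∀ i i' : Fin M, i ≠ i' → ∀ ε : ℤ, ε = 1 ∨ ε = -1 →
      {j | A i j ≠ 0 ∧ A i' j ≠ 0 ∧ A i j = ε * A i' j}.Subsingleton) :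
    ∃ f : (Fin N → ℝ) → (Fin 2 → ℝ),
      ContinuousOn f (signComplexReal A) ∧
      (∀ x ∈ signComplexReal A, f x ≠ 0) ∧
      (∀ x, x ∈ signComplexReal A → -x ∈ signComplexReal A → f (-x) = -f x) := by
  set P := ⋃ i, rowSimplex A i
  have hP : IsClosed P := isClosed_iUnion_of_finite (isClosed_rowSimplex A)
  have hX : signComplexReal A = P ∪ -P := by
    simp only [signComplexReal, P, Set.iUnion_union_distrib, Set.iUnion_neg]
  refine ⟨fun x => ![∑ j, x j, infDist x (-P) - infDist x P], by fun_prop, ?_, ?_⟩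
  · intro x hx h0
    have hdist : infDist x (-P) = infDist x P := sub_eq_zero.1 (by simpa using congrFun h0 1)
    obtain ⟨hxP, hxP'⟩ := mem_inter_neg_of_infDist_eq hP (hX ▸ hx) hdist
    obtain ⟨i, hi⟩ := Set.mem_iUnion.1 hxP
    obtain ⟨i', hi'⟩ := Set.mem_iUnion.1 (Set.mem_neg.1 hxP')
    exact sum_ne_zero_of_mem_rowSimplex_of_neg_mem hfacet hi hi' (by simpa using congrFun h0 0)
  · intro x _ _
    ext k
    fin_cases k <;> simp [infDist_neg, Finset.sum_neg_distrib]

/-- Small pairwise facet intersections force ℤ₂-index at most 1: if any two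
distinct rows of `A` agree (up to a global sign `ε`) on at most one commonly
specified column — i.e. every pair of facets of `S(A)` meets in at most one
vertex — then there is a ℤ₂-equivariant continuous map `|S(A)| → ℝ² \ {0}`,
so `ind_{ℤ₂}(S(A)) ≤ 1`. -/
theorem facet_intersection_index_le_one {M N : ℕ} (A : Fin M → Fin N → ℤ)
    (hA : ∀ i j, A i j = -1 ∨ A i j = 0 ∨ A i j = 1)
    (hfacet : ∀ i i' : Fin M, i ≠ i' → ∀ ε : ℤ, ε = 1 ∨ ε = -1 →
      {j | A i j ≠ 0 ∧ A i' j ≠ 0 ∧ A i j = ε * A i' j}.Subsingleton) :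
    ∃ f : (Fin N → ℝ) → (Fin 2 → ℝ),
      ContinuousOn f (signComplexReal A) ∧
      (∀ x ∈ signComplexReal A, f x ≠ 0) ∧
      (∀ x, x ∈ signComplexReal A → -x ∈ signComplexReal A → f (-x) = -f x) :=
  facet_intersection_index_le_one_general A hfacet
end

section
/- (Nerve of the facet cover equals the sign complex of the transpose.) Let A : Fin M → Fin N → ℤ be a partial sign matrix and let R, T ⊆ Fin M be disjoint finsets of rows with R ∪ T nonempty. Then the intersection (⋂_{i ∈ R} σ_i) ∩ (⋂_{j ∈ T} (−σ_j)) of the realized row simplices is nonempty if and only if there exist a column c ∈ Fin N and a sign ε ∈ {1, −1} such that A i c = ε for all i ∈ R and A j c = −ε for all j ∈ T. (This is the face characterization showing that the nerve of the cover of S(A) by the facets K_i^± is isomorphic to S(Aᵀ).) -/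
open scoped Pointwise

/-!
Every vertex of `σ_i` other than `e_c` has nonpositive `c`-th coordinate, so `x c > 0` for some
`x ∈ σ_i` forces `A i c = 1`; symmetrically `x c < 0` forces `A i c = -1`. Moreover `σ_i` lies in the
hyperplane `⟪A i, y⟫ = 1`, so `0 ∉ σ_i`. Hence a common point of the `σ_i` (`i ∈ R`) and `-σ_j`
(`j ∈ T`) has a nonzero coordinate `c`, whose sign is the required `ε`; conversely `ε e_c` is a
common point.
-/

section RowSimplex

variable {M N : ℕ} (A : Fin M → Fin N → ℤ) (i : Fin M)

lemma neg_rowSimplex : -rowSimplex A i = rowSimplex (-A) i := by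
  rw [rowSimplex, rowSimplex, ← convexHull_neg, Set.union_neg, Set.union_comm]
  congr 2 <;> ext x <;> simp [neg_eq_iff_eq_neg]

lemma rowSimplex_subset_setOf_dotProduct_eq_one :
    rowSimplex A i ⊆ {y | (fun k => (A i k : ℝ)) ⬝ᵥ y = 1} := by
  refine convexHull_min ?_ <|
    convex_hyperplane ⟨dotProduct_add _, fun r y => dotProduct_smul r _ y⟩ 1
  rintro y (⟨j, hj, rfl⟩ | ⟨j, hj, rfl⟩) <;> simp [dotProduct_single, hj]

lemma ne_zero_of_mem_rowSimplex {x : Fin N → ℝ} (hx : x ∈ rowSimplex A i) : x ≠ 0 := by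
  rintro rfl
  simpa using rowSimplex_subset_setOf_dotProduct_eq_one A i hx

variable {A i}

lemma eq_one_of_mem_rowSimplex {x : Fin N → ℝ} (hx : x ∈ rowSimplex A i) {c : Fin N}
    (hc : 0 < x c) : A i c = 1 := by
  by_contra h
  have hsub : rowSimplex A i ⊆ {y | y c ≤ 0} := by
    refine convexHull_min ?_ (convex_halfSpace_le (LinearMap.proj c).isLinear 0)
    rintro y (⟨j, hj, rfl⟩ | ⟨j, hj, rfl⟩) <;> obtain rfl | hjc := eq_or_ne c j <;>
      simp_all
  exact (hsub hx).not_gt hc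

lemma eq_neg_one_of_mem_rowSimplex {x : Fin N → ℝ} (hx : x ∈ rowSimplex A i) {c : Fin N}
    (hc : x c < 0) : A i c = -1 := by
  have hx' : -x ∈ rowSimplex (-A) i := neg_rowSimplex A i ▸ Set.neg_mem_neg.mpr hx
  simpa [neg_eq_iff_eq_neg] using eq_one_of_mem_rowSimplex hx' (c := c) (by simpa using hc)

lemma single_mem_rowSimplex {c : Fin N} (h : A i c = 1) : Pi.single c 1 ∈ rowSimplex A i :=
  subset_convexHull ℝ _ (Or.inl ⟨c, h, rfl⟩)

lemma neg_single_mem_rowSimplex {c : Fin N} (h : A i c = -1) :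
    -Pi.single c 1 ∈ rowSimplex A i :=
  subset_convexHull ℝ _ (Or.inr ⟨c, h, rfl⟩)

end RowSimplex

theorem nerve_eq_transpose_general {M N : ℕ} (A : Fin M → Fin N → ℤ)
    (R T : Finset (Fin M)) (hne : (R ∪ T).Nonempty) :
    ((⋂ i ∈ R, rowSimplex A i) ∩ ⋂ j ∈ T, -(rowSimplex A j)).Nonempty ↔
      ∃ (c : Fin N) (ε : ℤ), (ε = 1 ∨ ε = -1) ∧
        (∀ i ∈ R, A i c = ε) ∧ (∀ j ∈ T, A j c = -ε) := by
  simp only [Set.Nonempty, Set.mem_inter_iff, Set.mem_iInter, Set.mem_neg]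
  constructor
  · rintro ⟨x, hxR, hxT⟩
    have hx : x ≠ 0 := by
      obtain ⟨i, hi⟩ := hne
      rcases Finset.mem_union.mp hi with hi | hi
      · exact ne_zero_of_mem_rowSimplex A i (hxR i hi)
      · exact neg_ne_zero.mp (ne_zero_of_mem_rowSimplex A i (hxT i hi))
    obtain ⟨c, hc⟩ := Function.ne_iff.mp hx
    rcases hc.lt_or_gt with hneg | hpos
    · refine ⟨c, -1, .inr rfl, fun i hi => eq_neg_one_of_mem_rowSimplex (hxR i hi) hneg,
        fun j hj => ?_⟩
      simpa using eq_one_of_mem_rowSimplex (hxT j hj) (c := c) (by simpa using hneg)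
    · exact ⟨c, 1, .inl rfl, fun i hi => eq_one_of_mem_rowSimplex (hxR i hi) hpos,
        fun j hj => eq_neg_one_of_mem_rowSimplex (hxT j hj) (by simpa using hpos)⟩
  · rintro ⟨c, ε, rfl | rfl, hR, hT⟩
    · exact ⟨Pi.single c 1, fun i hi => single_mem_rowSimplex (hR i hi),
        fun j hj => neg_single_mem_rowSimplex (hT j hj)⟩
    · refine ⟨-Pi.single c 1, fun i hi => neg_single_mem_rowSimplex (hR i hi),
        fun j hj => ?_⟩
      rw [neg_neg]
      exact single_mem_rowSimplex (by simpa using hT j hj)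

/-- Nerve of the facet cover equals the sign complex of the transpose
(face characterization): for disjoint sets of rows `R, T` with `R ∪ T`
nonempty, the intersection `(⋂_{i∈R} σ_i) ∩ (⋂_{j∈T} (-σ_j))` is nonempty iff
some column `c` and sign `ε ∈ {1,-1}` satisfy `A i c = ε` for all `i ∈ R` and
`A j c = -ε` for all `j ∈ T`. -/
theorem nerve_eq_transpose {M N : ℕ} (A : Fin M → Fin N → ℤ)
    (hA : ∀ i j, A i j = -1 ∨ A i j = 0 ∨ A i j = 1)
    (R T : Finset (Fin M)) (hdisj : Disjoint R T) (hne : (R ∪ T).Nonempty) :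
    ((⋂ i ∈ R, rowSimplex A i) ∩ ⋂ j ∈ T, -(rowSimplex A j)).Nonempty ↔
      ∃ (c : Fin N) (ε : ℤ), (ε = 1 ∨ ε = -1) ∧
        (∀ i ∈ R, A i c = ε) ∧ (∀ j ∈ T, A j c = -ε) :=
  nerve_eq_transpose_general A R T hne
end
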